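/- arXiv:2603.06468 — 7 statements merged into one kernel-verified Lean document; each statement's English description precedes it below -/
import Mathlib

section
/- A subset K ⊆ 𝒮 has compact closure in (𝒮, d_𝒮) if and only if all three of the following hold: (i) sup_{ξ∈K} |||ξ|||_𝒮 < ∞; (ii) for every ε > 0 there exists R > 0 such that sup_{ξ∈K} ∑_{x∈L⁻¹ℤ, |x|≥R} ‖ξ(x)‖_{ℓ¹}/(1+|x|)² ≤ ε; (iii) for every x ∈ L⁻¹ℤ there exists J ∈ ℕ₀ such that ξ_k(x) = 0 for every k ≥ J and every ξ ∈ K. -/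
open scoped ENNReal NNReal BigOperators

namespace SpatialMuller

/-- Configurations: `ξ n k` is the number of particles carrying `k` mutations
living at the deme with position `n / L`. -/
abbrev Config : Type := ℤ → ℕ → ℕ

/-- The real position `n / L` of the deme indexed by `n : ℤ`. -/
noncomputable def pos (L : ℝ) (n : ℤ) : ℝ := (n : ℝ) / L

/-- The weight `(1 + |x|) ^ 2` at the deme indexed by `n`, as an extended real. -/
noncomputable def w (L : ℝ) (n : ℤ) : ℝ≥0∞ := ENNReal.ofReal ((1 + |pos L n|) ^ 2)

lemma w_ne_zero (L : ℝ) (n : ℤ) : w L n ≠ 0 := by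
  have h : (0 : ℝ) < (1 + |pos L n|) ^ 2 := by positivity
  simp only [w, ne_eq, ENNReal.ofReal_eq_zero, not_le]
  exact h

lemma w_ne_top (L : ℝ) (n : ℤ) : w L n ≠ ∞ := ENNReal.ofReal_ne_top

/-- `‖ξ(x)‖_{ℓ¹} ∈ [0,∞]`: the total number of particles at the deme indexed by `n`. -/
noncomputable def cellMass (ξ : Config) (n : ℤ) : ℝ≥0∞ := ∑' k : ℕ, (ξ n k : ℝ≥0∞)

/-- `|||ξ|||_𝒮`: the total weighted mass of the configuration `ξ`. -/
noncomputable def tmass (L : ℝ) (ξ : Config) : ℝ≥0∞ := ∑' n : ℤ, cellMass ξ n / w L n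

/-- The `ℓ¹` distance between the contents of the deme indexed by `n`. -/
noncomputable def cellDist (ξ ζ : Config) (n : ℤ) : ℝ≥0∞ :=
  ∑' k : ℕ, (((ξ n k : ℤ) - (ζ n k : ℤ)).natAbs : ℝ≥0∞)

/-- The metric `d_𝒮`, with values in `[0,∞]`. -/
noncomputable def dS (L : ℝ) (ξ ζ : Config) : ℝ≥0∞ := ∑' n : ℤ, cellDist ξ ζ n / w L n

/-- The state space `𝒮` of configurations with finite total weighted mass. -/
def SpaceS (L : ℝ) : Type := {ξ : Config // tmass L ξ ≠ ∞}

/-- `𝒮` carries the (extended) metric `d_𝒮`. -/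
noncomputable instance instEMetricSpaceS (L : ℝ) : EMetricSpace (SpaceS L) where
  edist ξ ζ := dS L ξ.1 ζ.1
  edist_self ξ := by
    simp [dS, cellDist]
  edist_comm ξ ζ := by
    simp only [dS]
    refine tsum_congr fun n => ?_
    congr 1
    simp only [cellDist]
    refine tsum_congr fun k => ?_
    congr 1
    omega
  edist_triangle ξ ζ ρ := by
    simp only [dS]
    have key : ∀ n : ℤ, cellDist ξ.1 ρ.1 n / w L n ≤
        cellDist ξ.1 ζ.1 n / w L n + cellDist ζ.1 ρ.1 n / w L n := by
      intro n
      rw [← ENNReal.add_div]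
      refine ENNReal.div_le_div_right ?_ _
      simp only [cellDist]
      rw [← ENNReal.tsum_add]
      refine ENNReal.tsum_le_tsum fun k => ?_
      have htri : ((ξ.1 n k : ℤ) - (ρ.1 n k : ℤ)).natAbs ≤
          ((ξ.1 n k : ℤ) - (ζ.1 n k : ℤ)).natAbs + ((ζ.1 n k : ℤ) - (ρ.1 n k : ℤ)).natAbs := by
        omega
      exact_mod_cast htri
    exact (ENNReal.tsum_le_tsum key).trans (le_of_eq ENNReal.tsum_add)
  eq_of_edist_eq_zero := by
    intro ξ ζ h
    apply Subtype.ext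
    funext n k
    simp only [dS, ENNReal.tsum_eq_zero] at h
    rcases ENNReal.div_eq_zero_iff.mp (h n) with h1 | h1
    · simp only [cellDist, ENNReal.tsum_eq_zero] at h1
      have h2 := h1 k
      have h3 : ((ξ.1 n k : ℤ) - (ζ.1 n k : ℤ)).natAbs = 0 := by exact_mod_cast h2
      omega
    · exact absurd h1 (w_ne_top L n)

/-!
A deme is frozen by a small perturbation: if `d_𝒮(ξ, ζ) < (1 + |x|)⁻²` then `ξ(x) = ζ(x)`,
since the coordinates are integers. Together with the bounds `|||ξ||| ≤ d_𝒮(ξ, ζ) + |||ζ|||`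
(and the same for tails) this makes (i)–(iii) pass from a finite `ε`-net to a totally bounded
set. Conversely, under (i)–(iii) only finitely many demes matter up to `ε`, and on each of them
only finitely many coordinates, with boundedly many values; so `K` has a finite discretization
at every scale and is totally bounded. Freezing also shows that a Cauchy sequence stabilises
deme by deme, and lower semicontinuity of `d_𝒮` in the product topology shows it converges to
the demewise limit, so `𝒮` is complete and total boundedness gives compact closure.
-/

end SpatialMuller

open Filter Topology Set

section TotallyBounded

variable {X : Type*} [PseudoEMetricSpace X] {s : Set X}

theorem EMetric.totallyBounded_of_finite_discretization
    (H : ∀ ε > 0, ∃ (β : Type*) (F : X → β), (F '' s).Finite ∧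
      ∀ x ∈ s, ∀ y ∈ s, F x = F y → edist x y < ε) :
    TotallyBounded s := by
  refine EMetric.totallyBounded_iff.2 fun ε hε => ?_
  obtain ⟨β, F, hfin, hF⟩ := H ε hε
  choose g hgs hgF using fun b : F '' s => b.2
  have := hfin.to_subtype
  exact ⟨range g, finite_range g, fun x hx => mem_iUnion₂.2
    ⟨g ⟨F x, mem_image_of_mem F hx⟩, mem_range_self _, hF x hx _ (hgs _) (hgF ⟨F x, _⟩).symm⟩⟩

theorem TotallyBounded.eventually_forall_of_edist_lt (hs : TotallyBounded s) {ι : Type*}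
    {l : Filter ι} {P Q : ι → X → Prop} {δ : ℝ≥0∞} (hδ : 0 < δ)
    (hPQ : ∀ i x y, edist x y < δ → P i y → Q i x) (hP : ∀ y, ∀ᶠ i in l, P i y) :
    ∀ᶠ i in l, ∀ x ∈ s, Q i x := by
  obtain ⟨t, ht, hst⟩ := EMetric.totallyBounded_iff.1 hs δ hδ
  filter_upwards [(eventually_all_finite ht).2 fun y _ => hP y] with i hi x hx
  obtain ⟨y, hy, hxy⟩ := mem_iUnion₂.1 (hst hx)
  exact hPQ i x y hxy (hi y hy)

end TotallyBounded

theorem ENNReal.ofReal_half_add_half {r : ℝ} (hr : 0 ≤ r) :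
    ENNReal.ofReal (r / 2) + ENNReal.ofReal (r / 2) = ENNReal.ofReal r := by
  rw [← ENNReal.ofReal_add (by positivity) (by positivity), _root_.add_halves]

theorem isCompact_closure_iff_totallyBounded {α : Type*} [UniformSpace α] [CompleteSpace α]
    {s : Set α} : IsCompact (closure s) ↔ TotallyBounded s :=
  ⟨fun h => totallyBounded_closure.1 h.totallyBounded,
    fun h => h.closure.isCompact_of_isClosed isClosed_closure⟩

namespace SpatialMuller

variable {L : ℝ}

noncomputable def tail (L R : ℝ) (ξ : Config) : ℝ≥0∞ :=
  ∑' n : ℤ, if R ≤ |pos L n| then cellMass ξ n / w L n else 0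

lemma cellMass_le_cellDist_add (ξ ζ : Config) (n : ℤ) :
    cellMass ξ n ≤ cellDist ξ ζ n + cellMass ζ n := by
  rw [cellMass, cellDist, cellMass, ← ENNReal.tsum_add]
  refine ENNReal.tsum_le_tsum fun k => ?_
  exact_mod_cast (by omega : ξ n k ≤ ((ξ n k : ℤ) - ζ n k).natAbs + ζ n k)

lemma cellDist_le_cellMass_add (ξ ζ : Config) (n : ℤ) :
    cellDist ξ ζ n ≤ cellMass ξ n + cellMass ζ n := by
  rw [cellMass, cellDist, cellMass, ← ENNReal.tsum_add]
  refine ENNReal.tsum_le_tsum fun k => ?_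
  exact_mod_cast (by omega : ((ξ n k : ℤ) - ζ n k).natAbs ≤ ξ n k + ζ n k)

lemma cellMass_le_tmass_mul (ξ : Config) (n : ℤ) : cellMass ξ n ≤ tmass L ξ * w L n :=
  calc cellMass ξ n = cellMass ξ n / w L n * w L n :=
        (ENNReal.div_mul_cancel (w_ne_zero L n) (w_ne_top L n)).symm
    _ ≤ tmass L ξ * w L n := by gcongr; exact ENNReal.le_tsum n

lemma tmass_le_dS_add (ξ ζ : Config) : tmass L ξ ≤ dS L ξ ζ + tmass L ζ := by
  rw [tmass, dS, tmass, ← ENNReal.tsum_add]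
  refine ENNReal.tsum_le_tsum fun n => ?_
  rw [← ENNReal.add_div]
  exact ENNReal.div_le_div_right (cellMass_le_cellDist_add ξ ζ n) _

lemma tail_le_dS_add (R : ℝ) (ξ ζ : Config) : tail L R ξ ≤ dS L ξ ζ + tail L R ζ := by
  rw [tail, dS, tail, ← ENNReal.tsum_add]
  refine ENNReal.tsum_le_tsum fun n => ?_
  split_ifs
  · rw [← ENNReal.add_div]
    exact ENNReal.div_le_div_right (cellMass_le_cellDist_add ξ ζ n) _
  · exact zero_le

lemma dS_le_tail_add_tail {R : ℝ} {ξ ζ : Config} (h : ∀ n, |pos L n| < R → ξ n = ζ n) :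
    dS L ξ ζ ≤ tail L R ξ + tail L R ζ := by
  rw [tail, dS, tail, ← ENNReal.tsum_add]
  refine ENNReal.tsum_le_tsum fun n => ?_
  split_ifs with hn
  · rw [← ENNReal.add_div]
    exact ENNReal.div_le_div_right (cellDist_le_cellMass_add ξ ζ n) _
  · simp [cellDist, h n (not_le.1 hn)]

lemma eq_of_dS_lt {ξ ζ : Config} {n : ℤ} (h : dS L ξ ζ < (w L n)⁻¹) : ξ n = ζ n := by
  have hcell : cellDist ξ ζ n < 1 := by
    have := (ENNReal.le_tsum n).trans_lt h
    rwa [ENNReal.div_lt_iff (Or.inl (w_ne_zero L n)) (Or.inl (w_ne_top L n)),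
      ENNReal.inv_mul_cancel (w_ne_zero L n) (w_ne_top L n)] at this
  funext k
  have hk : (((ξ n k : ℤ) - ζ n k).natAbs : ℝ≥0∞) < 1 := (ENNReal.le_tsum k).trans_lt hcell
  have : ((ξ n k : ℤ) - ζ n k).natAbs < 1 := by exact_mod_cast hk
  omega

lemma lowerSemicontinuous_dS (ζ : Config) : LowerSemicontinuous fun ξ : Config => dS L ξ ζ := by
  refine lowerSemicontinuous_tsum fun n => ?_
  have hcell : LowerSemicontinuous fun ξ : Config => cellDist ξ ζ n :=
    lowerSemicontinuous_tsum fun k =>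
      ((continuous_of_discreteTopology
        (f := fun a : ℕ => ((((a : ℤ) - ζ n k).natAbs : ℕ) : ℝ≥0∞))).comp
        ((continuous_apply k).comp (continuous_apply n))).lowerSemicontinuous
  exact (ENNReal.continuous_div_const _ (w_ne_zero L n)).comp_lowerSemicontinuous hcell
    fun a b hab => ENNReal.div_le_div_right hab _

instance : CompleteSpace (SpaceS L) := by
  refine EMetric.complete_of_cauchySeq_tendsto fun u hu => ?_
  choose N hN using fun n => (EMetric.cauchySeq_iff'.1 hu _ (ENNReal.inv_pos.2 (w_ne_top L n)))
  set g : Config := fun n => (u (N n)).1 n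
  have hg : Tendsto (fun m => (u m).1) atTop (𝓝 g) :=
    tendsto_pi_nhds.2 fun n => tendsto_const_nhds.congr'
      ((eventually_ge_atTop (N n)).mono fun m hm => (eq_of_dS_lt (hN n m hm)).symm)
  have hclose : ∀ ε > 0, ∀ᶠ m in atTop, dS L g (u m).1 ≤ ε := by
    intro ε hε
    obtain ⟨M, hM⟩ := EMetric.cauchySeq_iff.1 hu ε hε
    filter_upwards [eventually_ge_atTop M] with m hm
    refine ((lowerSemicontinuous_dS (u m).1).isClosed_preimage ε).mem_of_tendsto hg ?_
    filter_upwards [eventually_ge_atTop M] with m' hm' using (hM m' hm' m hm).le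
  obtain ⟨m, hm⟩ := (hclose 1 one_pos).exists
  have hgS : tmass L g ≠ ∞ :=
    ne_top_of_le_ne_top (ENNReal.add_ne_top.2 ⟨ENNReal.one_ne_top, (u m).2⟩)
      ((tmass_le_dS_add g _).trans (add_le_add_left hm _))
  refine ⟨(⟨g, hgS⟩ : SpaceS L), tendsto_iff_edist_tendsto_0.2 ?_⟩
  refine ENNReal.tendsto_nhds_zero.2 fun ε hε => ?_
  filter_upwards [hclose ε hε] with m hm
  exact (edist_comm _ _).trans_le hm

lemma tendsto_tail_atTop {ξ : Config} (hξ : tmass L ξ ≠ ∞) :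
    Tendsto (fun R => tail L R ξ) atTop (𝓝 0) := by
  refine ENNReal.tendsto_nhds_zero.2 fun ε hε => ?_
  obtain ⟨s, hs⟩ := ((tendsto_order.1 (ENNReal.tendsto_tsum_compl_atTop_zero hξ)).2 ε hε).exists
  filter_upwards [(eventually_all_finset s).2 fun n _ => eventually_gt_atTop |pos L n|] with R hR
  calc tail L R ξ ≤ ∑' n, {n | n ∉ s}.indicator (fun n => cellMass ξ n / w L n) n := by
        refine ENNReal.tsum_le_tsum fun n => ?_
        split_ifs with hn
        · rw [indicator_of_mem (show n ∈ {n | n ∉ s} from fun hns => (hR n hns).not_ge hn)]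
        · exact zero_le
    _ = ∑' n : {n // n ∉ s}, cellMass ξ n / w L n := (tsum_subtype _ _).symm
    _ ≤ ε := hs.le

lemma eventually_coord_eq_zero {ξ : Config} (hξ : tmass L ξ ≠ ∞) (n : ℤ) :
    ∀ᶠ J in atTop, ∀ k, J ≤ k → ξ n k = 0 := by
  have hfin := ENNReal.finite_const_le_of_tsum_ne_top
    (ne_top_of_le_ne_top (ENNReal.mul_ne_top hξ (w_ne_top L n)) (cellMass_le_tmass_mul ξ n))
    one_ne_zero
  rw [eventually_forall_ge_atTop, ← Nat.cofinite_eq_atTop]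
  filter_upwards [hfin.eventually_cofinite_notMem] with k hk
  simpa using hk

lemma iSup_tmass_ne_top_of_totallyBounded {K : Set (SpaceS L)} (hK : TotallyBounded K) :
    (⨆ ξ ∈ K, tmass L ξ.1) ≠ ∞ := by
  have hP (ζ : SpaceS L) : ∀ᶠ c : ℕ in atTop, tmass L ζ.1 ≤ c := by
    obtain ⟨N, hN⟩ := ENNReal.exists_nat_gt ζ.2
    filter_upwards [eventually_ge_atTop N] with c hc
    exact hN.le.trans (by exact_mod_cast hc)
  obtain ⟨c, hc⟩ := (hK.eventually_forall_of_edist_lt one_pos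
    (Q := fun (c : ℕ) ξ => tmass L ξ.1 ≤ 1 + c)
    (fun _ ξ ζ hξζ hζ => (tmass_le_dS_add _ _).trans (add_le_add hξζ.le hζ)) hP).exists
  exact ne_top_of_le_ne_top (by simp) (iSup₂_le hc)

lemma exists_tail_le_of_totallyBounded {K : Set (SpaceS L)} (hK : TotallyBounded K) {ε : ℝ}
    (hε : 0 < ε) : ∃ R : ℝ, 0 < R ∧ ∀ ξ ∈ K, tail L R ξ.1 ≤ ENNReal.ofReal ε := by
  have hε2 : 0 < ENNReal.ofReal (ε / 2) := ENNReal.ofReal_pos.2 (half_pos hε)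
  have := hK.eventually_forall_of_edist_lt hε2
    (Q := fun R ξ => tail L R ξ.1 ≤ ENNReal.ofReal ε)
    (fun R ξ ζ hξζ hζ => ENNReal.ofReal_half_add_half hε.le ▸
      (tail_le_dS_add R _ _).trans (add_le_add hξζ.le hζ))
    fun ζ => ENNReal.tendsto_nhds_zero.1 (tendsto_tail_atTop ζ.2) _ hε2
  exact ((eventually_gt_atTop 0).and this).exists

lemma exists_coord_eq_zero_of_totallyBounded {K : Set (SpaceS L)} (hK : TotallyBounded K)
    (n : ℤ) : ∃ J : ℕ, ∀ ξ ∈ K, ∀ k, J ≤ k → ξ.1 n k = 0 :=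
  (hK.eventually_forall_of_edist_lt (ENNReal.inv_pos.2 (w_ne_top L n))
    (P := fun J ξ => ∀ k, J ≤ k → ξ.1 n k = 0) (Q := fun J ξ => ∀ k, J ≤ k → ξ.1 n k = 0)
    (fun _ _ _ h hζ k hk => (congrFun (eq_of_dS_lt h) k).trans (hζ k hk))
    fun ζ => eventually_coord_eq_zero ζ.2 n).exists

lemma finite_setOf_abs_pos_lt (hL : 0 < L) (R : ℝ) : {n : ℤ | |pos L n| < R}.Finite := by
  refine (finite_Icc (-⌈R * L⌉) ⌈R * L⌉).subset fun n (hn : |pos L n| < R) => ?_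
  rw [pos, abs_div, abs_of_pos hL, div_lt_iff₀ hL, abs_lt] at hn
  have hceil := Int.le_ceil (R * L)
  rw [mem_Icc, neg_le]
  constructor
  · exact_mod_cast (by push_cast; linarith : ((-n : ℤ) : ℝ) ≤ ⌈R * L⌉)
  · exact_mod_cast (by linarith : (n : ℝ) ≤ ⌈R * L⌉)

lemma exists_coord_bound {K : Set (SpaceS L)} (hK : (⨆ ξ ∈ K, tmass L ξ.1) ≠ ∞) (n : ℤ) :
    ∃ B : ℕ, ∀ ξ ∈ K, ∀ k, ξ.1 n k ≤ B := by
  obtain ⟨B, hB⟩ := ENNReal.exists_nat_gt (ENNReal.mul_ne_top hK (w_ne_top L n))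
  refine ⟨B, fun ξ hξ k => ?_⟩
  have : (ξ.1 n k : ℝ≥0∞) ≤ B :=
    calc (ξ.1 n k : ℝ≥0∞) ≤ cellMass ξ.1 n := ENNReal.le_tsum k
      _ ≤ tmass L ξ.1 * w L n := cellMass_le_tmass_mul _ n
      _ ≤ (⨆ ξ ∈ K, tmass L ξ.1) * w L n := mul_le_mul_of_nonneg_right
          (le_iSup₂ (f := fun (ξ : SpaceS L) (_ : ξ ∈ K) => tmass L ξ.1) ξ hξ) zero_le
      _ ≤ B := hB.le
  exact_mod_cast this

theorem totallyBounded_of_tight (hL : 0 < L) {K : Set (SpaceS L)}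
    (hmass : (⨆ ξ ∈ K, tmass L ξ.1) ≠ ∞)
    (htail : ∀ ε : ℝ, 0 < ε → ∃ R : ℝ, 0 < R ∧ ∀ ξ ∈ K, tail L R ξ.1 ≤ ENNReal.ofReal ε)
    (hsupp : ∀ n : ℤ, ∃ J : ℕ, ∀ ξ ∈ K, ∀ k, J ≤ k → ξ.1 n k = 0) :
    TotallyBounded K := by
  choose J hJ using hsupp
  choose B hB using exists_coord_bound hmass
  refine EMetric.totallyBounded_of_finite_discretization fun ε hε => ?_
  obtain ⟨r, -, hr, hrε⟩ := ENNReal.lt_iff_exists_real_btwn.1 hε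
  have hr : 0 < r := ENNReal.ofReal_pos.1 hr
  obtain ⟨R, -, hR⟩ := htail (r / 2) (half_pos hr)
  obtain ⟨I, hI⟩ := (finite_setOf_abs_pos_lt hL R).exists_finset
  let W : Finset (ℤ × ℕ) := I ×ˢ Finset.range (I.sup J)
  refine ⟨W → ℕ, fun ξ p => ξ.1 p.1.1 p.1.2, ?_, fun ξ hξ ζ hζ hF => ?_⟩
  · refine (Set.Finite.pi fun p : W => finite_Iic (B p.1.1)).subset ?_
    rintro _ ⟨ξ, hξ, rfl⟩ p -
    exact hB p.1.1 ξ hξ p.1.2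
  have hagree : ∀ n, |pos L n| < R → ξ.1 n = ζ.1 n := fun n hn => funext fun k => by
    by_cases hk : k < J n
    · have hnI : n ∈ I := (hI n).2 hn
      have hW : (n, k) ∈ W :=
        Finset.mem_product.2 ⟨hnI, Finset.mem_range.2 (hk.trans_le (Finset.le_sup hnI))⟩
      exact congrFun hF ⟨(n, k), hW⟩
    · rw [hJ n ξ hξ k (not_lt.1 hk), hJ n ζ hζ k (not_lt.1 hk)]
  calc edist ξ ζ ≤ tail L R ξ.1 + tail L R ζ.1 := dS_le_tail_add_tail hagree
    _ ≤ ENNReal.ofReal (r / 2) + ENNReal.ofReal (r / 2) := add_le_add (hR ξ hξ) (hR ζ hζ)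
    _ = ENNReal.ofReal r := ENNReal.ofReal_half_add_half hr.le
    _ < ε := hrε

/-- A subset `K ⊆ 𝒮` has compact closure in `(𝒮, d_𝒮)` if and only if:
(i) `sup_{ξ∈K} |||ξ|||_𝒮 < ∞`; (ii) for every `ε > 0` there is `R > 0` such that
`sup_{ξ∈K} ∑_{|x|≥R} ‖ξ(x)‖_{ℓ¹}/(1+|x|)² ≤ ε`; (iii) for every deme `x` there is `J` with
`ξ_k(x) = 0` for all `k ≥ J` and all `ξ ∈ K`. -/
theorem statement1 (L : ℝ) (hL : 0 < L) (K : Set (SpaceS L)) :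
    IsCompact (closure K) ↔
      ((⨆ ξ ∈ K, tmass L ξ.1) ≠ ∞ ∧
        (∀ ε : ℝ, 0 < ε → ∃ R : ℝ, 0 < R ∧ ∀ ξ ∈ K,
          (∑' x : ℤ, if R ≤ |pos L x| then cellMass ξ.1 x / w L x else 0) ≤
            ENNReal.ofReal ε) ∧
        (∀ x : ℤ, ∃ J : ℕ, ∀ ξ ∈ K, ∀ k : ℕ, J ≤ k → ξ.1 x k = 0)) := by
  rw [isCompact_closure_iff_totallyBounded]
  exact ⟨fun hK => ⟨iSup_tmass_ne_top_of_totallyBounded hK,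
      fun _ hε => exists_tail_le_of_totallyBounded hK hε,
      exists_coord_eq_zero_of_totallyBounded hK⟩,
    fun ⟨hmass, htail, hsupp⟩ => totallyBounded_of_tight hL hmass htail hsupp⟩

end SpatialMuller
end

section
/- Let (S,d) be a complete separable metric space, (Ω,ℱ,P) a probability space with a filtration (ℱ_t)_{t≥0}, A a set of continuous functions S → ℝ, and suppose to each φ ∈ A is assigned a continuous function 𝓛φ : S → ℝ. Let η = (η_t)_{t≥0} be an S-valued process, jointly measurable in (t,ω) and adapted to (ℱ_t), whose sample paths are càdlàg (right-continuous with left limits), and assume that for every φ ∈ A and T ≥ 0 the process T ↦ φ(η_T) − φ(η_0) − ∫₀^T 𝓛φ(η_s) ds is a well-defined (ℱ_t)-martingale (in particular the Lebesgue integral exists and is integrable). Fix T ≥ 0 and continuous functions g, g', h : [0,T] × S → ℝ such that: (i) sup_{t₁,t₂∈[0,T]} E[|g(t₁,η_{t₂})|] < ∞; (ii) for every ζ ∈ S and t ∈ [0,T], the function t' ↦ g(t',ζ) is differentiable at t with derivative g'(t,ζ); (iii) for every t ∈ [0,T], g(t,·) ∈ A and 𝓛(g(t,·)) = h(t,·);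 (iv) sup_{t₁,t₂∈[0,T]} E[g'(t₁,η_{t₂})² + h(t₁,η_{t₂})²] < ∞. Then the process t ↦ g(t∧T, η_{t∧T}) − g(0,η_0) − ∫₀^{t∧T} (g'(s,η_s) + h(s,η_s)) ds, t ≥ 0, is an (ℱ_t)-martingale. -/
/-!
Write `N u = g(u, η_u) − g(0, η_0) − ∫₀ᵘ (g' + h)(s, η_s) ds`, so that the claim is that
`N (t ∧ T)` is a martingale. For `0 ≤ u₁ < u₂ ≤ T`, cut `(u₁, u₂]` into cells `(p_k, p_{k+1}]`
of mesh `δ`. Freezing time at `p_k`, the martingale problem for `g(p_k, ·)` gives an increment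
over the cell with vanishing conditional expectation given `ℱ_{u₁}`, and by the fundamental
theorem of calculus in time the sum of these increments is `N u₂ − N u₁` up to
`∫_{u₁}^{u₂} [g'(v, η_{ρ v}) − g'(v, η_v)] + [h(κ v, η_v) − h(v, η_v)] dv`, where `ρ v` and
`κ v` are the right and left endpoints of the cell containing `v`. As `δ → 0` the integrand
tends to zero pointwise by right-continuity of the paths and continuity of `g'` and `h`, and the
second-moment bound (iv) makes it uniformly integrable, so the error tends to zero in `L¹`.
Hence `E[N u₂ − N u₁ | ℱ_{u₁}] = 0`. Adaptedness of the time integral comes from the joint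
measurability of a right-continuous adapted process on `[0, u] × Ω` for `ℱ_u`.
-/

open MeasureTheory Filter Set

namespace StochasticChainRule

/-- The compensated process `T ↦ φ(η_T) − φ(η_0) − ∫₀^T ψ(η_s) ds` associated with a test
function `φ` and its generator value `ψ = 𝓛φ`. -/
noncomputable def comp {S Ω : Type*} (φ ψ : S → ℝ) (η : ℝ → Ω → S) (t : ℝ) (ω : Ω) : ℝ :=
  φ (η t ω) - φ (η 0 ω) - ∫ s in Ioc (0 : ℝ) t, ψ (η s ω)

/-- `M` is an `(ℱ_t)_{t ≥ 0}`-martingale: adapted, integrable, and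
`E[M_{t₂} | ℱ_{t₁}] = M_{t₁}` a.s. for all `0 ≤ t₁ ≤ t₂`. -/
def IsMartOn {Ω : Type*} {m0 : MeasurableSpace Ω} (ℱ : Filtration ℝ m0) (P : Measure Ω)
    (M : ℝ → Ω → ℝ) : Prop :=
  (∀ t : ℝ, 0 ≤ t → Measurable[ℱ t] (M t)) ∧
  (∀ t : ℝ, 0 ≤ t → Integrable (M t) P) ∧
  (∀ t₁ t₂ : ℝ, 0 ≤ t₁ → t₁ ≤ t₂ → P[M t₂|ℱ t₁] =ᵐ[P] M t₁)

open Topology Function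
open scoped ENNReal

section Grid

noncomputable def gridCeil (a δ v : ℝ) : ℝ := a + ⌈(v - a) / δ⌉ * δ

variable {a b δ v : ℝ}

lemma le_gridCeil (hδ : 0 < δ) : v ≤ gridCeil a δ v := by
  have h := Int.le_ceil ((v - a) / δ)
  rw [div_le_iff₀ hδ] at h
  unfold gridCeil
  linarith

lemma gridCeil_lt (hδ : 0 < δ) : gridCeil a δ v < v + δ := by
  have h := Int.ceil_lt_add_one ((v - a) / δ)
  rw [← sub_lt_iff_lt_add, lt_div_iff₀ hδ] at h
  unfold gridCeil
  linarith

lemma gridCeil_mem_Icc (hδ : 0 < δ) {m : ℕ} (hv : v ∈ Ioc a (a + m * δ)) :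
    gridCeil a δ v ∈ Icc a (a + m * δ) := by
  have h : ⌈(v - a) / δ⌉ ≤ m := Int.ceil_le.2 ((div_le_iff₀ hδ).2 (by push_cast; linarith [hv.2]))
  have h' : (⌈(v - a) / δ⌉ : ℝ) ≤ m := by exact_mod_cast h
  refine ⟨hv.1.le.trans (le_gridCeil hδ), ?_⟩
  unfold gridCeil
  nlinarith

lemma gridCeil_sub_mem_Icc (hδ : 0 < δ) (hv : v ∈ Ioc a b) : gridCeil a δ v - δ ∈ Icc a b := by
  have h : (1 : ℝ) ≤ ⌈(v - a) / δ⌉ := by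
    exact_mod_cast Int.ceil_pos.2 (div_pos (sub_pos.2 hv.1) hδ)
  refine ⟨?_, by linarith [gridCeil_lt (a := a) (v := v) hδ, hv.2]⟩
  unfold gridCeil
  nlinarith

lemma gridCeil_eq (hδ : 0 < δ) {k : ℕ} (hv : v ∈ Ioc (a + k * δ) (a + ↑(k + 1) * δ)) :
    gridCeil a δ v = a + ↑(k + 1) * δ := by
  have h : ⌈(v - a) / δ⌉ = ↑(k + 1) := by
    rw [Int.ceil_eq_iff, lt_div_iff₀ hδ, div_le_iff₀ hδ]
    push_cast at hv ⊢
    constructor <;> linarith [hv.1, hv.2]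
  simp [gridCeil, h]

lemma measurable_gridCeil : Measurable (gridCeil a δ) := by
  unfold gridCeil
  fun_prop

lemma tendsto_gridCeil {δ : ℕ → ℝ} (hδ : ∀ n, 0 < δ n) (hδ0 : Tendsto δ atTop (𝓝 0)) (a v : ℝ) :
    Tendsto (fun n => gridCeil a (δ n) v) atTop (𝓝[≥] v) :=
  tendsto_nhdsWithin_of_tendsto_nhds_of_eventually_within _
    (tendsto_of_tendsto_of_tendsto_of_le_of_le tendsto_const_nhds
      (by simpa using tendsto_const_nhds.add hδ0) (fun n => le_gridCeil (hδ n))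
      fun n => (gridCeil_lt (hδ n)).le)
    (Eventually.of_forall fun n => le_gridCeil (hδ n))

lemma tendsto_gridCeil_sub {δ : ℕ → ℝ} (hδ : ∀ n, 0 < δ n) (hδ0 : Tendsto δ atTop (𝓝 0))
    (a v : ℝ) : Tendsto (fun n => gridCeil a (δ n) v - δ n) atTop (𝓝 v) := by
  simpa using ((tendsto_gridCeil hδ hδ0 a v).mono_right nhdsWithin_le_nhds).sub hδ0

end Grid

section RightContinuous

variable {X : Type*} [TopologicalSpace X]

lemma continuousWithinAt_Ici_comp_projIcc {a b : ℝ} (hab : a ≤ b) {f : ℝ → X}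
    (hf : ∀ s ∈ Icc a b, ContinuousWithinAt f (Ici s) s) (s : ℝ) :
    ContinuousWithinAt (fun r => f (projIcc a b hab r)) (Ici s) s := by
  have hproj : Continuous fun r => (projIcc a b hab r : ℝ) :=
    continuous_subtype_val.comp continuous_projIcc
  exact (hf _ (projIcc a b hab s).2).tendsto.comp
    (hproj.continuousWithinAt.tendsto_nhdsWithin fun r hr => monotone_projIcc hab hr)

lemma continuous_uncurry_comp_projIcc {a b : ℝ} (hab : a ≤ b) {f : ℝ → X → ℝ}
    (hf : ContinuousOn (fun q : ℝ × X => f q.1 q.2) (Icc a b ×ˢ univ)) :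
    Continuous (uncurry fun t => f (projIcc a b hab t)) :=
  hf.comp_continuous
    (((continuous_subtype_val.comp (continuous_projIcc (h := hab))).comp continuous_fst).prodMk
      continuous_snd)
    fun q => ⟨(projIcc a b hab q.1).2, mem_univ _⟩

variable [TopologicalSpace.PseudoMetrizableSpace X] [MeasurableSpace X] [BorelSpace X]
  {Ω : Type*}

/-- The values on the grids `ℤ / (n + 1)` only involve countably many times, and converge to the
process by right-continuity. -/
lemma measurable_uncurry_of_continuousWithinAt_Ici [MeasurableSpace Ω] {Y : ℝ → Ω → X}
    (hY : ∀ s, Measurable (Y s)) (hrc : ∀ ω s, ContinuousWithinAt (Y · ω) (Ici s) s) :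
    Measurable (uncurry Y) := by
  have hδ : ∀ n : ℕ, (0 : ℝ) < 1 / (n + 1) := fun n => by positivity
  refine measurable_of_tendsto_metrizable
    (f := fun n p => Y (gridCeil 0 (1 / (n + 1)) p.1) p.2) (fun n => ?_) ?_
  · have hgrid : Measurable fun q : Ω × ℤ => Y (0 + q.2 * (1 / (n + 1))) q.1 :=
      measurable_from_prod_countable_left fun k => hY (0 + k * (1 / (n + 1)))
    exact hgrid.comp (measurable_snd.prodMk (Int.measurable_ceil.comp (by fun_prop)))
  · exact tendsto_pi_nhds.2 fun p => (hrc p.2 p.1).tendsto.comp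
      (tendsto_gridCeil hδ tendsto_one_div_add_atTop_nhds_zero_nat 0 p.1)

lemma measurable_setIntegral_Ioc_of_continuousWithinAt {m : MeasurableSpace Ω} {η : ℝ → Ω → X}
    {u : ℝ} (hu : 0 ≤ u) (hη : ∀ r ∈ Icc 0 u, Measurable (η r))
    (hrc : ∀ ω, ∀ r ∈ Icc 0 u, ContinuousWithinAt (η · ω) (Ici r) r)
    {Φ : ℝ → X → ℝ} (hΦ : Measurable (uncurry Φ)) :
    Measurable fun ω => ∫ s in Ioc 0 u, Φ s (η s ω) := by
  have hY : Measurable (uncurry fun s ω => η (projIcc 0 u hu s) ω) :=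
    measurable_uncurry_of_continuousWithinAt_Ici (fun s => hη _ (projIcc 0 u hu s).2)
      fun ω => continuousWithinAt_Ici_comp_projIcc hu (hrc ω)
  have hF : Measurable fun p : ℝ × Ω => Φ p.1 (η (projIcc 0 u hu p.1) p.2) :=
    hΦ.comp (measurable_fst.prodMk hY)
  convert (hF.stronglyMeasurable.integral_prod_left' (μ := volume.restrict (Ioc 0 u))).measurable
    using 2 with ω
  refine setIntegral_congr_fun measurableSet_Ioc fun s hs => ?_
  simp [projIcc_of_mem hu ⟨hs.1.le, hs.2⟩]

end RightContinuous

section Lintegral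

variable {α β : Type*} [MeasurableSpace α] [MeasurableSpace β]

lemma enorm_sq_eq_ofReal_sq (a : ℝ) : ‖a‖ₑ ^ 2 = ENNReal.ofReal (a ^ 2) := by
  rw [Real.enorm_eq_ofReal_abs, ← ENNReal.ofReal_pow (abs_nonneg a), sq_abs]

lemma lintegral_enorm_sq_le_of_sq_add_sq {μ : Measure α} {f g : α → ℝ} {C : ℝ≥0∞}
    (h : ∫⁻ x, ENNReal.ofReal (f x ^ 2 + g x ^ 2) ∂μ ≤ C) :
    ∫⁻ x, ‖f x‖ₑ ^ 2 ∂μ ≤ C ∧ ∫⁻ x, ‖g x‖ₑ ^ 2 ∂μ ≤ C := by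
  simp only [enorm_sq_eq_ofReal_sq]
  exact ⟨(lintegral_mono fun x =>
      ENNReal.ofReal_le_ofReal (le_add_of_nonneg_right (sq_nonneg _))).trans h,
    (lintegral_mono fun x =>
      ENNReal.ofReal_le_ofReal (le_add_of_nonneg_left (sq_nonneg _))).trans h⟩

lemma enorm_sub_sq_le (a b : ℝ) : ‖a - b‖ₑ ^ 2 ≤ 2 * (‖a‖ₑ ^ 2 + ‖b‖ₑ ^ 2) := by
  simp only [enorm_sq_eq_ofReal_sq]
  rw [← ENNReal.ofReal_add (sq_nonneg a) (sq_nonneg b), ← ENNReal.ofReal_ofNat 2,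
    ← ENNReal.ofReal_mul zero_le_two]
  exact ENNReal.ofReal_le_ofReal (by nlinarith [sq_nonneg (a + b)])

lemma lintegral_le_lintegral_sq_add_measure_univ (μ : Measure α) (f : α → ℝ≥0∞) :
    ∫⁻ x, f x ∂μ ≤ ∫⁻ x, f x ^ 2 ∂μ + μ univ := by
  calc ∫⁻ x, f x ∂μ ≤ ∫⁻ x, (f x ^ 2 + 1) ∂μ := lintegral_mono fun x => by
        rcases le_total (f x) 1 with h | h
        · exact h.trans le_add_self
        · exact (le_self_pow h two_ne_zero).trans le_self_add
    _ = ∫⁻ x, f x ^ 2 ∂μ + μ univ := by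
        rw [lintegral_add_right _ measurable_const, lintegral_const, one_mul]

lemma integrable_prod_of_ae_lintegral_enorm_le {μ : Measure α} [IsFiniteMeasure μ]
    {ν : Measure β} [SFinite ν] {f : α × β → ℝ} (hf : AEStronglyMeasurable f (μ.prod ν))
    {B : ℝ≥0∞} (hB : B ≠ ∞) (hbound : ∀ᵐ x ∂μ, ∫⁻ y, ‖f (x, y)‖ₑ ∂ν ≤ B) :
    Integrable f (μ.prod ν) := by
  refine ⟨hf, ?_⟩
  calc ∫⁻ z, ‖f z‖ₑ ∂μ.prod ν = ∫⁻ x, ∫⁻ y, ‖f (x, y)‖ₑ ∂ν ∂μ := lintegral_prod _ hf.enorm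
    _ ≤ ∫⁻ _, B ∂μ := lintegral_mono_ae hbound
    _ < ∞ := by rw [lintegral_const]; exact ENNReal.mul_lt_top hB.lt_top (measure_lt_top μ univ)

/-- Uniform integrability from a uniform bound on second moments (Vitali): the truncation
`x ≤ min x k + x ^ 2 / k` splits off a part that is small by dominated convergence and a part
of integral at most `B / k`. -/
lemma tendsto_lintegral_of_tendsto_ae_of_lintegral_sq_le {μ : Measure α} [IsFiniteMeasure μ]
    {f : ℕ → α → ℝ≥0∞} (hf : ∀ n, AEMeasurable (f n) μ)
    (hlim : ∀ᵐ x ∂μ, Tendsto (f · x) atTop (𝓝 0)) {B : ℝ≥0∞} (hB : B ≠ ∞)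
    (hsq : ∀ n, ∫⁻ x, f n x ^ 2 ∂μ ≤ B) :
    Tendsto (fun n => ∫⁻ x, f n x ∂μ) atTop (𝓝 0) := by
  have htrunc : ∀ (y : ℝ≥0∞) (k : ℕ), k ≠ 0 → y ≤ min y k + y ^ 2 / k := fun y k hk => by
    rcases le_total y k with hyk | hky
    · exact (min_eq_left hyk).ge.trans le_self_add
    · refine le_add_left ((ENNReal.le_div_iff_mul_le (Or.inl (by simpa using hk)) (by simp)).2 ?_)
      rw [sq]
      exact mul_le_mul_right hky y
  have hsplit : ∀ k : ℕ, k ≠ 0 → ∀ n, ∫⁻ x, f n x ∂μ ≤ ∫⁻ x, min (f n x) k ∂μ + B / k :=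
    fun k hk n => calc
      ∫⁻ x, f n x ∂μ ≤ ∫⁻ x, (min (f n x) k + f n x ^ 2 / k) ∂μ :=
        lintegral_mono fun x => htrunc _ k hk
      _ = ∫⁻ x, min (f n x) k ∂μ + (∫⁻ x, f n x ^ 2 ∂μ) / k := by
        rw [lintegral_add_left' ((hf n).min aemeasurable_const)]
        simp_rw [div_eq_mul_inv]
        rw [lintegral_mul_const'' _ ((hf n).pow_const 2)]
      _ ≤ ∫⁻ x, min (f n x) k ∂μ + B / k := by gcongr; exact hsq n
  have htrunc_lim : ∀ k : ℕ, Tendsto (fun n => ∫⁻ x, min (f n x) k ∂μ) atTop (𝓝 0) := fun k => by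
    simpa using tendsto_lintegral_of_dominated_convergence' (f := 0) (fun _ => (k : ℝ≥0∞))
      (fun n => (hf n).min aemeasurable_const)
      (fun n => Eventually.of_forall fun x => min_le_right _ _)
      (by simpa using ENNReal.mul_ne_top (by simp) (measure_ne_top μ univ))
      (hlim.mono fun x hx => by simpa using hx.min (tendsto_const_nhds (x := (k : ℝ≥0∞))))
  have hlimsup : ∀ k : ℕ, k ≠ 0 → limsup (fun n => ∫⁻ x, f n x ∂μ) atTop ≤ B / k :=
    fun k hk => by
      simpa using (limsup_le_limsup (Eventually.of_forall (hsplit k hk))).trans_eq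
        ((htrunc_lim k).add tendsto_const_nhds).limsup_eq
  have hBk : Tendsto (fun k : ℕ => B / k) atTop (𝓝 0) := by
    simpa [div_eq_mul_inv] using ENNReal.Tendsto.const_mul ENNReal.tendsto_inv_nat_nhds_zero
      (Or.inr hB)
  refine tendsto_of_le_liminf_of_limsup_le bot_le (ge_of_tendsto hBk ?_)
  filter_upwards [eventually_ne_atTop 0] with k hk using hlimsup k hk

lemma tendsto_lintegral_lintegral_of_tendsto_of_lintegral_sq_le {μ : Measure α}
    [IsFiniteMeasure μ] {ν : Measure β} [IsFiniteMeasure ν] {F : ℕ → α → β → ℝ≥0∞}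
    (hF : ∀ n, Measurable (uncurry (F n)))
    (hlim : ∀ᵐ x ∂μ, ∀ᵐ y ∂ν, Tendsto (F · x y) atTop (𝓝 0)) {B : ℝ≥0∞} (hB : B ≠ ∞)
    (hsq : ∀ᵐ x ∂μ, ∀ n, ∫⁻ y, F n x y ^ 2 ∂ν ≤ B) :
    Tendsto (fun n => ∫⁻ y, ∫⁻ x, F n x y ∂μ ∂ν) atTop (𝓝 0) := by
  simp_rw [← lintegral_lintegral_swap (hF _).aemeasurable]
  simpa using tendsto_lintegral_of_dominated_convergence'
    (F := fun n x => ∫⁻ y, F n x y ∂ν) (f := 0) (fun _ => B + ν univ)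
    (fun n => (hF n).lintegral_prod_right'.aemeasurable)
    (fun n => hsq.mono fun x hx =>
      (lintegral_le_lintegral_sq_add_measure_univ ν _).trans (add_le_add (hx n) le_rfl))
    (by simp [lintegral_const, ENNReal.mul_eq_top, hB])
    (by
      filter_upwards [hlim, hsq] with x hx hx'
      exact tendsto_lintegral_of_tendsto_ae_of_lintegral_sq_le
        (fun n => ((hF n).comp measurable_prodMk_left).aemeasurable) hx hB hx')

end Lintegral

section CondExp

variable {Ω : Type*} {m0 : MeasurableSpace Ω} {P : Measure Ω} {ℱ : Filtration ℝ m0}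

lemma condExp_ae_eq_zero_of_tendsto_lintegral {m : MeasurableSpace Ω} {X : Ω → ℝ}
    {Z : ℕ → Ω → ℝ} (hX : Integrable X P) (hZ : ∀ n, Integrable (Z n) P)
    (hZ0 : ∀ n, P[Z n|m] =ᵐ[P] 0) (hlim : Tendsto (fun n => ∫⁻ ω, ‖X ω - Z n ω‖ₑ ∂P) atTop (𝓝 0)) :
    P[X|m] =ᵐ[P] 0 := by
  have hle : ∀ n, eLpNorm (P[X|m]) 1 P ≤ ∫⁻ ω, ‖X ω - Z n ω‖ₑ ∂P := fun n => calc
    eLpNorm (P[X|m]) 1 P = eLpNorm (P[X - Z n|m]) 1 P := by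
      refine eLpNorm_congr_ae ?_
      filter_upwards [condExp_sub hX (hZ n) m, hZ0 n] with ω h h0
      simp [h, h0]
    _ ≤ eLpNorm (X - Z n) 1 P := eLpNorm_condExp_le_eLpNorm _ le_rfl
    _ = ∫⁻ ω, ‖X ω - Z n ω‖ₑ ∂P := eLpNorm_one_eq_lintegral_enorm
  exact (eLpNorm_eq_zero_iff integrable_condExp.1 one_ne_zero).1
    (le_antisymm (ge_of_tendsto' hlim hle) bot_le)

variable [IsFiniteMeasure P]

lemma IsMartOn.condExp_sub_ae_eq_zero {M : ℝ → Ω → ℝ} (hM : IsMartOn ℱ P M) {r s t : ℝ}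
    (hr : 0 ≤ r) (hrs : r ≤ s) (hst : s ≤ t) : P[M t - M s|ℱ r] =ᵐ[P] 0 := by
  have hs : 0 ≤ s := hr.trans hrs
  have hself : P[M s|ℱ s] = M s :=
    condExp_of_stronglyMeasurable (ℱ.le s) (hM.1 s hs).stronglyMeasurable (hM.2.1 s hs)
  have hinc : P[M t - M s|ℱ s] =ᵐ[P] 0 := by
    filter_upwards [condExp_sub (hM.2.1 t (hs.trans hst)) (hM.2.1 s hs) (ℱ s),
      hM.2.2 s t hs hst] with ω h ht
    simp [h, ht, hself]
  calc P[M t - M s|ℱ r] =ᵐ[P] P[P[M t - M s|ℱ s]|ℱ r] :=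
        (condExp_condExp_of_le (ℱ.mono hrs) (ℱ.le s)).symm
    _ =ᵐ[P] P[0|ℱ r] := condExp_congr_ae hinc
    _ = 0 := condExp_zero

lemma isMartOn_comp_min {N : ℝ → Ω → ℝ} {T : ℝ} (hT : 0 ≤ T)
    (hN : ∀ u ∈ Icc 0 T, Measurable[ℱ u] (N u)) (hNi : ∀ u ∈ Icc 0 T, Integrable (N u) P)
    (hinc : ∀ u₁ u₂, 0 ≤ u₁ → u₁ ≤ u₂ → u₂ ≤ T → P[N u₂ - N u₁|ℱ u₁] =ᵐ[P] 0) :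
    IsMartOn ℱ P fun t => N (min t T) := by
  have hmem : ∀ t, 0 ≤ t → min t T ∈ Icc 0 T := fun t ht => ⟨le_min ht hT, min_le_right _ _⟩
  have hself : ∀ u ∈ Icc 0 T, P[N u|ℱ u] = N u := fun u hu =>
    condExp_of_stronglyMeasurable (ℱ.le u) (hN u hu).stronglyMeasurable (hNi u hu)
  refine ⟨fun t ht => (hN _ (hmem t ht)).mono (ℱ.mono (min_le_left _ _)) le_rfl,
    fun t ht => hNi _ (hmem t ht), fun t₁ t₂ ht₁ ht₁₂ => ?_⟩
  change P[N (min t₂ T)|ℱ t₁] =ᵐ[P] N (min t₁ T)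
  rcases le_total T t₁ with hTt₁ | ht₁T
  · rw [min_eq_right hTt₁, min_eq_right (hTt₁.trans ht₁₂)]
    exact (condExp_of_stronglyMeasurable (ℱ.le t₁)
      ((hN T ⟨hT, le_rfl⟩).mono (ℱ.mono hTt₁) le_rfl).stronglyMeasurable
      (hNi T ⟨hT, le_rfl⟩)).eventuallyEq
  · have ht₂ := hmem t₂ (ht₁.trans ht₁₂)
    replace ht₁ : t₁ ∈ Icc 0 T := ⟨ht₁, ht₁T⟩
    have hsplit := condExp_add ((hNi _ ht₂).sub (hNi t₁ ht₁)) (hNi t₁ ht₁) (ℱ t₁)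
    rw [sub_add_cancel] at hsplit
    rw [min_eq_left ht₁T]
    filter_upwards [hsplit, hinc t₁ (min t₂ T) ht₁.1 (le_min ht₁₂ ht₁T) (min_le_right _ _)]
      with ω h h0
    simp [h, h0, hself t₁ ht₁]

end CondExp

section PathIntegrals

lemma setIntegral_Ioc_sub_setIntegral_Ioc {f : ℝ → ℝ} {a s t : ℝ} (has : a ≤ s) (hst : s ≤ t)
    (hf : IntegrableOn f (Ioc a t)) :
    (∫ r in Ioc a t, f r) - ∫ r in Ioc a s, f r = ∫ r in Ioc s t, f r := by
  rw [← intervalIntegral.integral_of_le (has.trans hst), ← intervalIntegral.integral_of_le has,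
    ← intervalIntegral.integral_of_le hst]
  exact intervalIntegral.integral_interval_sub_left
    ((intervalIntegrable_iff_integrableOn_Ioc_of_le (has.trans hst)).2 hf)
    ((intervalIntegrable_iff_integrableOn_Ioc_of_le has).2
      (hf.mono_set (Ioc_subset_Ioc le_rfl hst)))

lemma sum_setIntegral_Ioc {f : ℝ → ℝ} {p : ℕ → ℝ} (hp : Monotone p) {m : ℕ}
    (hf : IntegrableOn f (Ioc (p 0) (p m))) :
    ∑ k ∈ Finset.range m, ∫ v in Ioc (p k) (p (k + 1)), f v = ∫ v in Ioc (p 0) (p m), f v := by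
  rw [← intervalIntegral.integral_of_le (hp (Nat.zero_le m)),
    ← intervalIntegral.sum_integral_adjacent_intervals fun k hk =>
      (intervalIntegrable_iff_integrableOn_Ioc_of_le (hp k.le_succ)).2
        (hf.mono_set (Ioc_subset_Ioc (hp (Nat.zero_le k)) (hp hk)))]
  exact Finset.sum_congr rfl fun k _ => (intervalIntegral.integral_of_le (hp k.le_succ)).symm

/-- The fundamental theorem of calculus in time, applied cell by cell. -/
lemma sum_increments_eq {S : Type*} {g g' h : ℝ → S → ℝ} (x : ℝ → S) {p : ℕ → ℝ}
    (hp : Monotone p) {m : ℕ} {ρ κ : ℝ → ℝ}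
    (hρ : ∀ k < m, ∀ v ∈ Ioc (p k) (p (k + 1)), ρ v = p (k + 1))
    (hκ : ∀ k < m, ∀ v ∈ Ioc (p k) (p (k + 1)), κ v = p k)
    (hderiv : ∀ ζ, ∀ t ∈ Icc (p 0) (p m), HasDerivAt (g · ζ) (g' t ζ) t)
    (hg' : ∀ ζ, Continuous (g' · ζ))
    (hg'ρ : IntegrableOn (fun v => g' v (x (ρ v))) (Ioc (p 0) (p m)))
    (hhκ : IntegrableOn (fun v => h (κ v) (x v)) (Ioc (p 0) (p m))) :
    ∑ k ∈ Finset.range m, (g (p k) (x (p (k + 1))) - g (p k) (x (p k)) -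
        ∫ r in Ioc (p k) (p (k + 1)), h (p k) (x r)) =
      g (p m) (x (p m)) - g (p 0) (x (p 0)) -
        ((∫ v in Ioc (p 0) (p m), g' v (x (ρ v))) + ∫ v in Ioc (p 0) (p m), h (κ v) (x v)) := by
  have hcell : ∀ k < m, g (p k) (x (p (k + 1))) - g (p k) (x (p k)) -
      ∫ r in Ioc (p k) (p (k + 1)), h (p k) (x r) =
        g (p (k + 1)) (x (p (k + 1))) - g (p k) (x (p k)) -
          ((∫ v in Ioc (p k) (p (k + 1)), g' v (x (ρ v))) +
            ∫ v in Ioc (p k) (p (k + 1)), h (κ v) (x v)) := by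
    intro k hk
    have hle : p k ≤ p (k + 1) := hp k.le_succ
    have hftc : g (p (k + 1)) (x (p (k + 1))) - g (p k) (x (p (k + 1))) =
        ∫ v in Ioc (p k) (p (k + 1)), g' v (x (ρ v)) := by
      rw [setIntegral_congr_fun measurableSet_Ioc fun v hv => by rw [hρ k hk v hv],
        ← intervalIntegral.integral_of_le hle, intervalIntegral.integral_eq_sub_of_hasDerivAt
          (fun t ht => hderiv _ t (Icc_subset_Icc (hp (Nat.zero_le k)) (hp hk)
            (uIcc_of_le hle ▸ ht)))
          ((hg' _).intervalIntegrable _ _)]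
    have hfrozen : ∫ r in Ioc (p k) (p (k + 1)), h (p k) (x r) =
        ∫ v in Ioc (p k) (p (k + 1)), h (κ v) (x v) :=
      setIntegral_congr_fun measurableSet_Ioc fun v hv => by rw [hκ k hk v hv]
    rw [hfrozen, ← hftc]
    ring
  rw [Finset.sum_congr rfl fun k hk => hcell k (Finset.mem_range.1 hk), Finset.sum_sub_distrib,
    Finset.sum_add_distrib, Finset.sum_range_sub (fun k => g (p k) (x (p k))),
    sum_setIntegral_Ioc hp hg'ρ, sum_setIntegral_Ioc hp hhκ]

end PathIntegrals

section ChainRule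

variable {S Ω : Type*} {m0 : MeasurableSpace Ω} {P : Measure Ω} {ℱ : Filtration ℝ m0}

noncomputable def chainRuleComp (g g' h : ℝ → S → ℝ) (η : ℝ → Ω → S) (u : ℝ) (ω : Ω) : ℝ :=
  g u (η u ω) - g 0 (η 0 ω) - ∫ s in Ioc 0 u, (g' s (η s ω) + h s (η s ω))

noncomputable def compIncrementSum (g h : ℝ → S → ℝ) (η : ℝ → Ω → S) (p : ℕ → ℝ) (m : ℕ)
    (ω : Ω) : ℝ :=
  ∑ k ∈ Finset.range m,
    (comp (g (p k)) (h (p k)) η (p (k + 1)) ω - comp (g (p k)) (h (p k)) η (p k) ω)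

variable {η : ℝ → Ω → S} {g g' h : ℝ → S → ℝ} {T : ℝ}

lemma integrable_compIncrementSum (hM : ∀ c ∈ Icc 0 T, IsMartOn ℱ P (comp (g c) (h c) η))
    {p : ℕ → ℝ} (hp : Monotone p) {m : ℕ} (hp0 : 0 ≤ p 0) (hpm : p m ≤ T) :
    Integrable (compIncrementSum g h η p m) P := by
  have hmem : ∀ k ∈ Finset.range m, p k ∈ Icc 0 T := fun k hk =>
    ⟨hp0.trans (hp k.zero_le), (hp (Finset.mem_range.1 hk).le).trans hpm⟩
  exact integrable_finsetSum _ fun k hk =>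
    ((hM _ (hmem k hk)).2.1 _ (hp0.trans (hp (k + 1).zero_le))).sub
      ((hM _ (hmem k hk)).2.1 _ (hmem k hk).1)

lemma condExp_compIncrementSum_ae_eq_zero [IsFiniteMeasure P]
    (hM : ∀ c ∈ Icc 0 T, IsMartOn ℱ P (comp (g c) (h c) η)) {p : ℕ → ℝ} (hp : Monotone p)
    {m : ℕ} {r : ℝ} (hr : 0 ≤ r) (hrp : r ≤ p 0) (hpm : p m ≤ T) :
    P[compIncrementSum g h η p m|ℱ r] =ᵐ[P] 0 := by
  have hmem : ∀ k ∈ Finset.range m, p k ∈ Icc 0 T := fun k hk =>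
    ⟨(hr.trans hrp).trans (hp k.zero_le), (hp (Finset.mem_range.1 hk).le).trans hpm⟩
  have hsum : compIncrementSum g h η p m = ∑ k ∈ Finset.range m,
      (comp (g (p k)) (h (p k)) η (p (k + 1)) - comp (g (p k)) (h (p k)) η (p k)) := by
    ext ω
    simp [compIncrementSum, Finset.sum_apply]
  rw [hsum]
  refine (condExp_finsetSum (fun k hk => ((hM _ (hmem k hk)).2.1 _
    ((hmem k hk).1.trans (hp k.le_succ))).sub ((hM _ (hmem k hk)).2.1 _ (hmem k hk).1)) _).trans ?_
  refine (eventuallyEq_sum fun k hk => (hM _ (hmem k hk)).condExp_sub_ae_eq_zero hr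
    (hrp.trans (hp k.zero_le)) (hp k.le_succ)).trans ?_
  simp

lemma chainRuleComp_sub_sub_compIncrementSum {a b δ : ℝ}
    (hderiv : ∀ ζ, ∀ t ∈ Icc a b, HasDerivAt (g · ζ) (g' t ζ) t) (hg' : ∀ ζ, Continuous (g' · ζ))
    (ha : 0 ≤ a) (hδ : 0 < δ) {m : ℕ} (hab : a + m * δ = b) {ω : Ω}
    (hg'ω : IntegrableOn (fun s => g' s (η s ω)) (Ioc 0 b))
    (hhω : IntegrableOn (fun s => h s (η s ω)) (Ioc 0 b))
    (hg'ρ : IntegrableOn (fun s => g' s (η (gridCeil a δ s) ω)) (Ioc a b))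
    (hhκ : IntegrableOn (fun s => h (gridCeil a δ s - δ) (η s ω)) (Ioc a b))
    (hfrozen : ∀ k ∈ Finset.range m,
      IntegrableOn (fun s => h (a + k * δ) (η s ω)) (Ioc 0 (a + ↑(k + 1) * δ))) :
    chainRuleComp g g' h η b ω - chainRuleComp g g' h η a ω -
        compIncrementSum g h η (fun k => a + k * δ) m ω =
      (∫ v in Ioc a b, (g' v (η (gridCeil a δ v) ω) - g' v (η v ω))) +
        ∫ v in Ioc a b, (h (gridCeil a δ v - δ) (η v ω) - h v (η v ω)) := by
  set p : ℕ → ℝ := fun k => a + k * δ with hp_def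
  have hp : Monotone p := fun i j hij => by simp only [hp_def]; gcongr
  have hp0 : p 0 = a := by simp [hp_def]
  have hpm : p m = b := hab
  have hab' : a ≤ b := hpm ▸ hp0 ▸ hp m.zero_le
  have hsub : Ioc a b ⊆ Ioc 0 b := Ioc_subset_Ioc ha le_rfl
  have hN : chainRuleComp g g' h η b ω - chainRuleComp g g' h η a ω =
      g b (η b ω) - g a (η a ω) -
        ((∫ v in Ioc a b, g' v (η v ω)) + ∫ v in Ioc a b, h v (η v ω)) := by
    rw [← integral_add (hg'ω.mono_set hsub) (hhω.mono_set hsub),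
      ← setIntegral_Ioc_sub_setIntegral_Ioc ha hab'
        (f := fun s => g' s (η s ω) + h s (η s ω)) (hg'ω.add hhω)]
    simp only [chainRuleComp]
    ring
  have hZ : compIncrementSum g h η p m ω = g b (η b ω) - g a (η a ω) -
      ((∫ v in Ioc a b, g' v (η (gridCeil a δ v) ω)) +
        ∫ v in Ioc a b, h (gridCeil a δ v - δ) (η v ω)) := by
    have hsum := sum_increments_eq (g := g) (h := h) (η · ω) hp (m := m)
      (ρ := gridCeil a δ) (κ := fun v => gridCeil a δ v - δ)
      (fun k _ v hv => gridCeil_eq hδ (k := k) hv)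
      (fun k _ v hv => by rw [gridCeil_eq hδ (k := k) hv]; simp only [hp_def]; push_cast; ring)
      (fun ζ t ht => hderiv ζ t (by rwa [hp0, hpm] at ht)) hg'
      (by rwa [hp0, hpm]) (by rwa [hp0, hpm])
    rw [hp0, hpm] at hsum
    rw [compIncrementSum, ← hsum]
    refine Finset.sum_congr rfl fun k hk => ?_
    simp only [comp]
    rw [← setIntegral_Ioc_sub_setIntegral_Ioc (ha.trans (hp0 ▸ hp k.zero_le)) (hp k.le_succ)
      (hfrozen k hk)]
    ring
  rw [hN, hZ, integral_sub hg'ρ (hg'ω.mono_set hsub), integral_sub hhκ (hhω.mono_set hsub)]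
  ring

variable [MeasurableSpace S]

lemma integrable_prod_of_lintegral_sq_le [IsFiniteMeasure P] {Φ : ℝ → S → ℝ}
    (hΦ : Measurable (uncurry Φ)) (hη : Measurable (uncurry η)) {C : ℝ≥0∞} (hC : C ≠ ∞)
    (hΦC : ∀ t₁ ∈ Icc 0 T, ∀ t₂ ∈ Icc 0 T, ∫⁻ ω, ‖Φ t₁ (η t₂ ω)‖ₑ ^ 2 ∂P ≤ C)
    {θ₁ θ₂ : ℝ → ℝ} (hθ₁ : Measurable θ₁) (hθ₂ : Measurable θ₂) {a b : ℝ}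
    (hθ : ∀ s ∈ Ioc a b, θ₁ s ∈ Icc 0 T ∧ θ₂ s ∈ Icc 0 T) :
    Integrable (fun q : ℝ × Ω => Φ (θ₁ q.1) (η (θ₂ q.1) q.2))
      ((volume.restrict (Ioc a b)).prod P) := by
  have hmeas : Measurable fun q : ℝ × Ω => Φ (θ₁ q.1) (η (θ₂ q.1) q.2) :=
    hΦ.comp ((hθ₁.comp measurable_fst).prodMk
      (hη.comp ((hθ₂.comp measurable_fst).prodMk measurable_snd)))
  refine integrable_prod_of_ae_lintegral_enorm_le hmeas.aestronglyMeasurable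
    (B := C + P univ) (by finiteness) ?_
  filter_upwards [ae_restrict_mem measurableSet_Ioc] with s hs
  exact (lintegral_le_lintegral_sq_add_measure_univ P _).trans
    (add_le_add (hΦC _ (hθ s hs).1 _ (hθ s hs).2) le_rfl)

lemma integrable_chainRuleComp [IsFiniteMeasure P] (hη : Measurable (uncurry η))
    (hg' : Measurable (uncurry g')) (hh : Measurable (uncurry h)) {C : ℝ≥0∞} (hC : C ≠ ∞)
    (hg'C : ∀ t₁ ∈ Icc 0 T, ∀ t₂ ∈ Icc 0 T, ∫⁻ ω, ‖g' t₁ (η t₂ ω)‖ₑ ^ 2 ∂P ≤ C)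
    (hhC : ∀ t₁ ∈ Icc 0 T, ∀ t₂ ∈ Icc 0 T, ∫⁻ ω, ‖h t₁ (η t₂ ω)‖ₑ ^ 2 ∂P ≤ C)
    (hg : ∀ t ∈ Icc 0 T, Integrable (fun ω => g t (η t ω)) P) {u : ℝ} (hu : u ∈ Icc 0 T) :
    Integrable (chainRuleComp g g' h η u) P := by
  have hmem : ∀ s ∈ Ioc 0 u, s ∈ Icc 0 T ∧ s ∈ Icc 0 T := fun s hs =>
    ⟨⟨hs.1.le, hs.2.trans hu.2⟩, ⟨hs.1.le, hs.2.trans hu.2⟩⟩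
  have hg'i := integrable_prod_of_lintegral_sq_le hg' hη hC hg'C measurable_id' measurable_id' hmem
  have hhi := integrable_prod_of_lintegral_sq_le hh hη hC hhC measurable_id' measurable_id' hmem
  refine ((hg u hu).sub (hg 0 ⟨le_rfl, hu.1.trans hu.2⟩)).sub
    ((hg'i.integral_prod_right.add hhi.integral_prod_right).congr ?_)
  filter_upwards [hg'i.prod_left_ae, hhi.prod_left_ae] with ω hg'ω hhω
  exact (integral_add hg'ω hhω).symm

variable [MetricSpace S] [BorelSpace S]

lemma measurable_chainRuleComp (hadapt : ∀ t, 0 ≤ t → Measurable[ℱ t] (η t))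
    (hrc : ∀ ω, ∀ t, 0 ≤ t → ContinuousWithinAt (η · ω) (Ici t) t)
    (hg' : Measurable (uncurry g')) (hh : Measurable (uncurry h)) {u : ℝ} (hu : 0 ≤ u)
    (hg0 : Continuous (g 0)) (hgu : Continuous (g u)) :
    Measurable[ℱ u] (chainRuleComp g g' h η u) := by
  have hη : ∀ r ∈ Icc 0 u, Measurable[ℱ u] (η r) := fun r hr =>
    (hadapt r hr.1).mono (ℱ.mono hr.2) le_rfl
  exact ((hgu.measurable.comp (hη u ⟨hu, le_rfl⟩)).sub
    (hg0.measurable.comp (hη 0 ⟨le_rfl, hu⟩))).sub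
    (measurable_setIntegral_Ioc_of_continuousWithinAt (m := ℱ u) hu hη
      (fun ω r hr => hrc ω r hr.1) (Φ := fun s x => g' s x + h s x) (hg'.add hh))

lemma ae_integrableOn_of_lintegral_sq_le [IsFiniteMeasure P] {Φ : ℝ → S → ℝ}
    (hΦ : Continuous (uncurry Φ)) (hη : Measurable (uncurry η)) {C : ℝ≥0∞} (hC : C ≠ ∞)
    (hΦC : ∀ t₁ ∈ Icc 0 T, ∀ t₂ ∈ Icc 0 T, ∫⁻ ω, ‖Φ t₁ (η t₂ ω)‖ₑ ^ 2 ∂P ≤ C)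
    {θ₁ θ₂ : ℝ → ℝ} (hθ₁ : Measurable θ₁) (hθ₂ : Measurable θ₂) {a b : ℝ}
    (hθ : ∀ s ∈ Ioc a b, θ₁ s ∈ Icc 0 T ∧ θ₂ s ∈ Icc 0 T) :
    ∀ᵐ ω ∂P, IntegrableOn (fun s => Φ (θ₁ s) (η (θ₂ s) ω)) (Ioc a b) :=
  (integrable_prod_of_lintegral_sq_le hΦ.measurable hη hC hΦC hθ₁ hθ₂ hθ).prod_left_ae

lemma ae_enorm_sub_compIncrementSum_le [IsFiniteMeasure P] (hη : Measurable (uncurry η))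
    (hderiv : ∀ ζ, ∀ t ∈ Icc 0 T, HasDerivAt (g · ζ) (g' t ζ) t)
    (hg' : Continuous (uncurry g')) (hh : Continuous (uncurry h)) {C : ℝ≥0∞} (hC : C ≠ ∞)
    (hg'C : ∀ t₁ ∈ Icc 0 T, ∀ t₂ ∈ Icc 0 T, ∫⁻ ω, ‖g' t₁ (η t₂ ω)‖ₑ ^ 2 ∂P ≤ C)
    (hhC : ∀ t₁ ∈ Icc 0 T, ∀ t₂ ∈ Icc 0 T, ∫⁻ ω, ‖h t₁ (η t₂ ω)‖ₑ ^ 2 ∂P ≤ C)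
    {a b δ : ℝ} (ha : 0 ≤ a) (hbT : b ≤ T) (hδ : 0 < δ) {m : ℕ} (hab : a + m * δ = b) :
    ∀ᵐ ω ∂P, ‖chainRuleComp g g' h η b ω - chainRuleComp g g' h η a ω -
        compIncrementSum g h η (fun k => a + k * δ) m ω‖ₑ ≤
      (∫⁻ v in Ioc a b, ‖g' v (η (gridCeil a δ v) ω) - g' v (η v ω)‖ₑ) +
        ∫⁻ v in Ioc a b, ‖h (gridCeil a δ v - δ) (η v ω) - h v (η v ω)‖ₑ := by
  have hT : ∀ s ∈ Icc a b, s ∈ Icc 0 T := fun s hs => ⟨ha.trans hs.1, hs.2.trans hbT⟩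
  have hdiag : ∀ s ∈ Ioc 0 b, s ∈ Icc 0 T ∧ s ∈ Icc 0 T := fun s hs =>
    ⟨⟨hs.1.le, hs.2.trans hbT⟩, ⟨hs.1.le, hs.2.trans hbT⟩⟩
  have hgrid : ∀ k ≤ m, a + k * δ ∈ Icc 0 T := fun k hk => ⟨by positivity,
    (add_le_add_right (mul_le_mul_of_nonneg_right (Nat.cast_le.2 hk) hδ.le) a).trans (hab ▸ hbT)⟩
  have hfrozen : ∀ k ∈ Finset.range m, ∀ᵐ ω ∂P,
      IntegrableOn (fun s => h (a + k * δ) (η s ω)) (Ioc 0 (a + ↑(k + 1) * δ)) := fun k hk =>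
    ae_integrableOn_of_lintegral_sq_le hh hη hC hhC measurable_const measurable_id' fun s hs =>
      ⟨hgrid k (Finset.mem_range.1 hk).le,
        ⟨hs.1.le, hs.2.trans (hgrid (k + 1) (Finset.mem_range.1 hk)).2⟩⟩
  filter_upwards [
    ae_integrableOn_of_lintegral_sq_le hg' hη hC hg'C measurable_id' measurable_id' hdiag,
    ae_integrableOn_of_lintegral_sq_le hh hη hC hhC measurable_id' measurable_id' hdiag,
    ae_integrableOn_of_lintegral_sq_le hg' hη hC hg'C measurable_id' measurable_gridCeil
      fun s hs => ⟨hT s (Ioc_subset_Icc_self hs), hT _ (hab ▸ gridCeil_mem_Icc hδ (hab ▸ hs))⟩,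
    ae_integrableOn_of_lintegral_sq_le hh hη hC hhC (measurable_gridCeil.sub_const δ) measurable_id'
      fun s hs => ⟨hT _ (gridCeil_sub_mem_Icc hδ hs), hT s (Ioc_subset_Icc_self hs)⟩,
    (eventually_all_finset _).2 hfrozen] with ω hg'ω hhω hg'ρ hhκ hfrozenω
  rw [chainRuleComp_sub_sub_compIncrementSum (fun ζ t ht => hderiv ζ t (hT t ht))
    (fun ζ => hg'.comp (continuous_id.prodMk continuous_const)) ha hδ hab hg'ω hhω hg'ρ hhκ
    hfrozenω]
  exact (enorm_add_le _ _).trans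
    (add_le_add (enorm_integral_le_lintegral_enorm _) (enorm_integral_le_lintegral_enorm _))

lemma tendsto_lintegral_setLIntegral_enorm_sub [IsFiniteMeasure P]
    {Φ : ℝ → S → ℝ} (hΦ : Continuous (uncurry Φ)) (hη : Measurable (uncurry η))
    (hrc : ∀ ω, ∀ t, 0 ≤ t → ContinuousWithinAt (η · ω) (Ici t) t) {C : ℝ≥0∞} (hC : C ≠ ∞)
    (hΦC : ∀ t₁ ∈ Icc 0 T, ∀ t₂ ∈ Icc 0 T, ∫⁻ ω, ‖Φ t₁ (η t₂ ω)‖ₑ ^ 2 ∂P ≤ C)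
    {a b : ℝ} (ha : 0 ≤ a) (hbT : b ≤ T) {θ₁ θ₂ : ℕ → ℝ → ℝ} (hθ₁ : ∀ n, Measurable (θ₁ n))
    (hθ₂ : ∀ n, Measurable (θ₂ n)) (hθ : ∀ n, ∀ s ∈ Ioc a b, θ₁ n s ∈ Icc a b ∧ θ₂ n s ∈ Icc a b)
    (hθ₁s : ∀ s ∈ Ioc a b, Tendsto (θ₁ · s) atTop (𝓝 s))
    (hθ₂s : ∀ s ∈ Ioc a b, Tendsto (θ₂ · s) atTop (𝓝[≥] s)) :
    Tendsto (fun n => ∫⁻ ω, (∫⁻ s in Ioc a b, ‖Φ (θ₁ n s) (η (θ₂ n s) ω) - Φ s (η s ω)‖ₑ) ∂P)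
      atTop (𝓝 0) := by
  have hT : ∀ s ∈ Icc a b, s ∈ Icc 0 T := fun s hs => ⟨ha.trans hs.1, hs.2.trans hbT⟩
  have hsq : ∀ t₁ t₂, Measurable fun ω => ‖Φ t₁ (η t₂ ω)‖ₑ ^ 2 := fun t₁ t₂ =>
    (hΦ.measurable.comp (measurable_const.prodMk (hη.comp measurable_prodMk_left))).enorm.pow_const
      2
  refine tendsto_lintegral_lintegral_of_tendsto_of_lintegral_sq_le (B := 2 * (C + C))
    (fun n => ?_) ?_ (ENNReal.mul_ne_top (by simp) (ENNReal.add_ne_top.2 ⟨hC, hC⟩)) ?_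
  · exact ((hΦ.measurable.comp (((hθ₁ n).comp measurable_fst).prodMk
      (hη.comp (((hθ₂ n).comp measurable_fst).prodMk measurable_snd)))).sub
      (hΦ.measurable.comp (measurable_fst.prodMk hη))).enorm
  · filter_upwards [ae_restrict_mem measurableSet_Ioc] with s hs
    refine Eventually.of_forall fun ω => tendsto_iff_enorm_sub_tendsto_zero.1 ?_
    exact (hΦ.tendsto (s, η s ω)).comp ((hθ₁s s hs).prodMk_nhds
      ((hrc ω s (ha.trans hs.1.le)).tendsto.comp (hθ₂s s hs)))
  · filter_upwards [ae_restrict_mem measurableSet_Ioc] with s hs n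
    have hs' := hT s (Ioc_subset_Icc_self hs)
    calc ∫⁻ ω, ‖Φ (θ₁ n s) (η (θ₂ n s) ω) - Φ s (η s ω)‖ₑ ^ 2 ∂P
        ≤ ∫⁻ ω, 2 * (‖Φ (θ₁ n s) (η (θ₂ n s) ω)‖ₑ ^ 2 + ‖Φ s (η s ω)‖ₑ ^ 2) ∂P :=
          lintegral_mono fun ω => enorm_sub_sq_le _ _
      _ = 2 * ((∫⁻ ω, ‖Φ (θ₁ n s) (η (θ₂ n s) ω)‖ₑ ^ 2 ∂P) + ∫⁻ ω, ‖Φ s (η s ω)‖ₑ ^ 2 ∂P) := by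
          rw [lintegral_const_mul' 2 _ (by simp), lintegral_add_left (hsq _ _)]
      _ ≤ 2 * (C + C) := by
          gcongr
          · exact hΦC _ (hT _ (hθ n s hs).1) _ (hT _ (hθ n s hs).2)
          · exact hΦC s hs' s hs'

lemma tendsto_lintegral_grid_error [IsFiniteMeasure P] (hη : Measurable (uncurry η))
    (hrc : ∀ ω, ∀ t, 0 ≤ t → ContinuousWithinAt (η · ω) (Ici t) t)
    (hg' : Continuous (uncurry g')) (hh : Continuous (uncurry h)) {C : ℝ≥0∞} (hC : C ≠ ∞)
    (hg'C : ∀ t₁ ∈ Icc 0 T, ∀ t₂ ∈ Icc 0 T, ∫⁻ ω, ‖g' t₁ (η t₂ ω)‖ₑ ^ 2 ∂P ≤ C)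
    (hhC : ∀ t₁ ∈ Icc 0 T, ∀ t₂ ∈ Icc 0 T, ∫⁻ ω, ‖h t₁ (η t₂ ω)‖ₑ ^ 2 ∂P ≤ C)
    {a b : ℝ} (ha : 0 ≤ a) (hbT : b ≤ T) {δ : ℕ → ℝ} (hδ : ∀ n, 0 < δ n)
    (hδ0 : Tendsto δ atTop (𝓝 0)) (hgrid : ∀ n, ∃ m : ℕ, a + m * δ n = b) :
    Tendsto (fun n => ∫⁻ ω,
      ((∫⁻ v in Ioc a b, ‖g' v (η (gridCeil a (δ n) v) ω) - g' v (η v ω)‖ₑ) +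
        ∫⁻ v in Ioc a b, ‖h (gridCeil a (δ n) v - δ n) (η v ω) - h v (η v ω)‖ₑ) ∂P)
      atTop (𝓝 0) := by
  have hg'lim := tendsto_lintegral_setLIntegral_enorm_sub hg' hη hrc hC hg'C ha hbT
    (θ₁ := fun _ v => v) (θ₂ := fun n => gridCeil a (δ n)) (fun _ => measurable_id')
    (fun _ => measurable_gridCeil)
    (fun n v hv => ⟨Ioc_subset_Icc_self hv, by
      obtain ⟨m, hm⟩ := hgrid n
      exact hm ▸ gridCeil_mem_Icc (hδ n) (hm ▸ hv)⟩)
    (fun v _ => tendsto_const_nhds) (fun v _ => tendsto_gridCeil hδ hδ0 a v)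
  have hhlim := tendsto_lintegral_setLIntegral_enorm_sub hh hη hrc hC hhC ha hbT
    (θ₁ := fun n v => gridCeil a (δ n) v - δ n) (θ₂ := fun _ v => v)
    (fun _ => measurable_gridCeil.sub_const _) (fun _ => measurable_id')
    (fun n v hv => ⟨gridCeil_sub_mem_Icc (hδ n) hv, Ioc_subset_Icc_self hv⟩)
    (fun v _ => tendsto_gridCeil_sub hδ hδ0 a v)
    (fun v _ => tendsto_const_nhdsWithin (mem_Ici.2 le_rfl))
  refine (hg'lim.add hhlim).congr' (Eventually.of_forall fun n => ?_) |>.trans (by simp)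
  refine (lintegral_add_left ?_ _).symm
  exact Measurable.lintegral_prod_left' (f := fun q : ℝ × Ω =>
      ‖g' q.1 (η (gridCeil a (δ n) q.1) q.2) - g' q.1 (η q.1 q.2)‖ₑ)
    ((hg'.measurable.comp (measurable_fst.prodMk
      (hη.comp ((measurable_gridCeil.comp measurable_fst).prodMk measurable_snd)))).sub
      (hg'.measurable.comp (measurable_fst.prodMk hη))).enorm

lemma condExp_chainRuleComp_sub_ae_eq_zero [IsFiniteMeasure P]
    (hη : Measurable (uncurry η)) (hrc : ∀ ω, ∀ t, 0 ≤ t → ContinuousWithinAt (η · ω) (Ici t) t)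
    (hM : ∀ c ∈ Icc 0 T, IsMartOn ℱ P (comp (g c) (h c) η))
    (hderiv : ∀ ζ, ∀ t ∈ Icc 0 T, HasDerivAt (g · ζ) (g' t ζ) t)
    (hg' : Continuous (uncurry g')) (hh : Continuous (uncurry h)) {C : ℝ≥0∞} (hC : C ≠ ∞)
    (hg'C : ∀ t₁ ∈ Icc 0 T, ∀ t₂ ∈ Icc 0 T, ∫⁻ ω, ‖g' t₁ (η t₂ ω)‖ₑ ^ 2 ∂P ≤ C)
    (hhC : ∀ t₁ ∈ Icc 0 T, ∀ t₂ ∈ Icc 0 T, ∫⁻ ω, ‖h t₁ (η t₂ ω)‖ₑ ^ 2 ∂P ≤ C)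
    (hN : ∀ u ∈ Icc 0 T, Integrable (chainRuleComp g g' h η u) P)
    {u₁ u₂ : ℝ} (hu₁ : 0 ≤ u₁) (hu₁₂ : u₁ ≤ u₂) (hu₂ : u₂ ≤ T) :
    P[chainRuleComp g g' h η u₂ - chainRuleComp g g' h η u₁|ℱ u₁] =ᵐ[P] 0 := by
  rcases hu₁₂.eq_or_lt with rfl | hlt
  · simp
  set δ : ℕ → ℝ := fun n => (u₂ - u₁) / (n + 1) with hδ_def
  have hδ : ∀ n, 0 < δ n := fun n => div_pos (sub_pos.2 hlt) n.cast_add_one_pos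
  have hδ0 : Tendsto δ atTop (𝓝 0) := by
    simpa [hδ_def, div_eq_mul_inv] using
      tendsto_one_div_add_atTop_nhds_zero_nat.const_mul (u₂ - u₁)
  have hgrid : ∀ n, u₁ + ((n + 1 : ℕ) : ℝ) * δ n = u₂ := fun n => by
    simp only [hδ_def]
    push_cast
    field_simp
    ring
  have hp : ∀ n, Monotone fun k : ℕ => u₁ + k * δ n := fun n i j hij =>
    add_le_add_right (mul_le_mul_of_nonneg_right (Nat.cast_le.2 hij) (hδ n).le) _
  refine condExp_ae_eq_zero_of_tendsto_lintegral
    ((hN u₂ ⟨hu₁.trans hu₁₂, hu₂⟩).sub (hN u₁ ⟨hu₁, hu₁₂.trans hu₂⟩))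
    (Z := fun n => compIncrementSum g h η (fun k => u₁ + k * δ n) (n + 1))
    (fun n => integrable_compIncrementSum hM (hp n) (by simpa using hu₁) (hgrid n ▸ hu₂))
    (fun n => condExp_compIncrementSum_ae_eq_zero hM (hp n) hu₁ (by simp) (hgrid n ▸ hu₂)) ?_
  refine tendsto_of_tendsto_of_tendsto_of_le_of_le tendsto_const_nhds
    (tendsto_lintegral_grid_error hη hrc hg' hh hC hg'C hhC hu₁ hu₂ hδ hδ0 fun n => ⟨_, hgrid n⟩)
    (fun n => zero_le) fun n => lintegral_mono_ae ?_
  exact ae_enorm_sub_compIncrementSum_le hη hderiv hg' hh hC hg'C hhC hu₁ hu₂ (hδ n) (hgrid n)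

theorem isMartOn_chainRuleComp_min [IsFiniteMeasure P] (hη : Measurable (uncurry η))
    (hadapt : ∀ t, 0 ≤ t → Measurable[ℱ t] (η t))
    (hrc : ∀ ω, ∀ t, 0 ≤ t → ContinuousWithinAt (η · ω) (Ici t) t) (hT : 0 ≤ T)
    (hM : ∀ c ∈ Icc 0 T, IsMartOn ℱ P (comp (g c) (h c) η))
    (hg : ∀ t ∈ Icc 0 T, Continuous (g t))
    (hgi : ∀ t ∈ Icc 0 T, Integrable (fun ω => g t (η t ω)) P)
    (hderiv : ∀ ζ, ∀ t ∈ Icc 0 T, HasDerivAt (g · ζ) (g' t ζ) t)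
    (hg' : Continuous (uncurry g')) (hh : Continuous (uncurry h)) {C : ℝ≥0∞} (hC : C ≠ ∞)
    (hg'C : ∀ t₁ ∈ Icc 0 T, ∀ t₂ ∈ Icc 0 T, ∫⁻ ω, ‖g' t₁ (η t₂ ω)‖ₑ ^ 2 ∂P ≤ C)
    (hhC : ∀ t₁ ∈ Icc 0 T, ∀ t₂ ∈ Icc 0 T, ∫⁻ ω, ‖h t₁ (η t₂ ω)‖ₑ ^ 2 ∂P ≤ C) :
    IsMartOn ℱ P fun t => chainRuleComp g g' h η (min t T) := by
  have hN : ∀ u ∈ Icc 0 T, Integrable (chainRuleComp g g' h η u) P := fun u hu =>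
    integrable_chainRuleComp hη hg'.measurable hh.measurable hC hg'C hhC hgi hu
  exact isMartOn_comp_min hT
    (fun u hu => measurable_chainRuleComp hadapt hrc hg'.measurable hh.measurable hu.1
      (hg 0 ⟨le_rfl, hT⟩) (hg u hu)) hN
    (fun u₁ u₂ hu₁ hu₁₂ hu₂ => condExp_chainRuleComp_sub_ae_eq_zero hη hrc hM hderiv hg' hh hC
      hg'C hhC hN hu₁ hu₁₂ hu₂)

end ChainRule


theorem statement9_general
    {S : Type*} [MetricSpace S]
    [MeasurableSpace S] [BorelSpace S]
    {Ω : Type*} {m0 : MeasurableSpace Ω} (P : Measure Ω) [IsProbabilityMeasure P]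
    (ℱ : Filtration ℝ m0)
    (A : Set (S → ℝ))
    (Gen : (S → ℝ) → S → ℝ)
    (η : ℝ → Ω → S)
    (hη_jointly_meas : Measurable (Function.uncurry η))
    (hη_adapted : ∀ t : ℝ, 0 ≤ t → Measurable[ℱ t] (η t))
    (hη_right_cont : ∀ ω : Ω, ∀ t : ℝ, 0 ≤ t →
      ContinuousWithinAt (fun s => η s ω) (Ici t) t)
    (hmart : ∀ φ ∈ A, IsMartOn ℱ P (comp φ (Gen φ) η))
    (T : ℝ) (hT : 0 ≤ T)
    (g g' h : ℝ → S → ℝ)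
    (hg_cont : ContinuousOn (fun q : ℝ × S => g q.1 q.2) (Icc 0 T ×ˢ (univ : Set S)))
    (hg'_cont : ContinuousOn (fun q : ℝ × S => g' q.1 q.2) (Icc 0 T ×ˢ (univ : Set S)))
    (hh_cont : ContinuousOn (fun q : ℝ × S => h q.1 q.2) (Icc 0 T ×ˢ (univ : Set S)))
    (hI : ∃ C : ℝ, ∀ t₁ ∈ Icc (0 : ℝ) T, ∀ t₂ ∈ Icc (0 : ℝ) T,
      (∫⁻ ω, ENNReal.ofReal |g t₁ (η t₂ ω)| ∂P) ≤ ENNReal.ofReal C)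
    (hII : ∀ ζ : S, ∀ t ∈ Icc (0 : ℝ) T, HasDerivAt (fun t' => g t' ζ) (g' t ζ) t)
    (hIII : ∀ t ∈ Icc (0 : ℝ) T,
      (fun ζ => g t ζ) ∈ A ∧ Gen (fun ζ => g t ζ) = fun ζ => h t ζ)
    (hIV : ∃ C : ℝ, ∀ t₁ ∈ Icc (0 : ℝ) T, ∀ t₂ ∈ Icc (0 : ℝ) T,
      (∫⁻ ω, ENNReal.ofReal (g' t₁ (η t₂ ω) ^ 2 + h t₁ (η t₂ ω) ^ 2) ∂P) ≤
        ENNReal.ofReal C) :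
    IsMartOn ℱ P (fun t ω =>
      g (min t T) (η (min t T) ω) - g 0 (η 0 ω) -
        ∫ s in Ioc (0 : ℝ) (min t T), (g' s (η s ω) + h s (η s ω))) := by
  obtain ⟨C₁, hC₁⟩ := hI
  obtain ⟨C₂, hC₂⟩ := hIV
  -- `g'` and `h` only matter on `[0, T]`; extend them continuously by clamping time.
  set G' : ℝ → S → ℝ := fun t => g' (projIcc 0 T hT t) with hG'_def
  set H : ℝ → S → ℝ := fun t => h (projIcc 0 T hT t) with hH_def
  have hG'eq : ∀ t ∈ Icc 0 T, G' t = g' t := fun t ht => by simp [hG'_def, projIcc_of_mem hT ht]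
  have hHeq : ∀ t ∈ Icc 0 T, H t = h t := fun t ht => by simp [hH_def, projIcc_of_mem hT ht]
  have hprocess : (fun t ω => g (min t T) (η (min t T) ω) - g 0 (η 0 ω) -
      ∫ s in Ioc (0 : ℝ) (min t T), (g' s (η s ω) + h s (η s ω))) =
        fun t => chainRuleComp g G' H η (min t T) := by
    ext t ω
    refine congrArg _ (setIntegral_congr_fun measurableSet_Ioc fun s hs => ?_)
    have hs' : s ∈ Icc 0 T := ⟨hs.1.le, hs.2.trans (min_le_right _ _)⟩
    simp only [hG'eq s hs', hHeq s hs']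
  have hslice : ∀ t ∈ Icc 0 T, Continuous (g t) := fun t ht =>
    hg_cont.comp_continuous (Continuous.prodMk_right t) fun _ => ⟨ht, mem_univ _⟩
  rw [hprocess]
  refine isMartOn_chainRuleComp_min hη_jointly_meas hη_adapted hη_right_cont hT
    (fun c hc => ?_) hslice (fun t ht => ?_) (fun ζ t ht => hG'eq t ht ▸ hII ζ t ht)
    (continuous_uncurry_comp_projIcc hT hg'_cont) (continuous_uncurry_comp_projIcc hT hh_cont)
    ENNReal.ofReal_ne_top
    (fun t₁ ht₁ t₂ ht₂ => hG'eq t₁ ht₁ ▸ (lintegral_enorm_sq_le_of_sq_add_sq (hC₂ t₁ ht₁ t₂ ht₂)).1)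
    (fun t₁ ht₁ t₂ ht₂ => hHeq t₁ ht₁ ▸ (lintegral_enorm_sq_le_of_sq_add_sq (hC₂ t₁ ht₁ t₂ ht₂)).2)
  · have hmc := hmart _ (hIII c hc).1
    rw [(hIII c hc).2] at hmc
    rwa [hHeq c hc]
  · refine ⟨((hslice t ht).measurable.comp
      (hη_jointly_meas.comp measurable_prodMk_left)).aestronglyMeasurable, ?_⟩
    simpa only [HasFiniteIntegral, Real.enorm_eq_ofReal_abs] using
      (hC₁ t ht t ht).trans_lt ENNReal.ofReal_lt_top

/-- The stochastic chain rule: if `(η_t)` is a càdlàg adapted, jointly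
measurable process on a Polish space `S` solving the martingale problem for `(A, 𝓛)`, and
`g, g', h : [0,T] × S → ℝ` are continuous and satisfy (i)–(iv), then
`t ↦ g(t∧T, η_{t∧T}) − g(0,η_0) − ∫₀^{t∧T} (g'(s,η_s) + h(s,η_s)) ds` is an
`(ℱ_t)`-martingale. -/
theorem statement9
    {S : Type*} [MetricSpace S] [CompleteSpace S] [TopologicalSpace.SeparableSpace S]
    [MeasurableSpace S] [BorelSpace S]
    {Ω : Type*} {m0 : MeasurableSpace Ω} (P : Measure Ω) [IsProbabilityMeasure P]
    (ℱ : Filtration ℝ m0)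
    (A : Set (S → ℝ)) (hA : ∀ φ ∈ A, Continuous φ)
    (Gen : (S → ℝ) → S → ℝ) (hGen : ∀ φ ∈ A, Continuous (Gen φ))
    (η : ℝ → Ω → S)
    (hη_jointly_meas : Measurable (Function.uncurry η))
    (hη_adapted : ∀ t : ℝ, 0 ≤ t → Measurable[ℱ t] (η t))
    (hη_right_cont : ∀ ω : Ω, ∀ t : ℝ, 0 ≤ t →
      ContinuousWithinAt (fun s => η s ω) (Ici t) t)
    (hη_left_lim : ∀ ω : Ω, ∀ t : ℝ, 0 < t →
      ∃ l : S, Tendsto (fun s => η s ω) (nhdsWithin t (Iio t)) (nhds l))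
    (hwell_defined : ∀ φ ∈ A, ∀ T : ℝ, 0 ≤ T →
      ∀ᵐ ω ∂P, IntegrableOn (fun s => Gen φ (η s ω)) (Ioc (0 : ℝ) T) volume)
    (hmart : ∀ φ ∈ A, IsMartOn ℱ P (comp φ (Gen φ) η))
    (T : ℝ) (hT : 0 ≤ T)
    (g g' h : ℝ → S → ℝ)
    (hg_cont : ContinuousOn (fun q : ℝ × S => g q.1 q.2) (Icc 0 T ×ˢ (univ : Set S)))
    (hg'_cont : ContinuousOn (fun q : ℝ × S => g' q.1 q.2) (Icc 0 T ×ˢ (univ : Set S)))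
    (hh_cont : ContinuousOn (fun q : ℝ × S => h q.1 q.2) (Icc 0 T ×ˢ (univ : Set S)))
    (hI : ∃ C : ℝ, ∀ t₁ ∈ Icc (0 : ℝ) T, ∀ t₂ ∈ Icc (0 : ℝ) T,
      (∫⁻ ω, ENNReal.ofReal |g t₁ (η t₂ ω)| ∂P) ≤ ENNReal.ofReal C)
    (hII : ∀ ζ : S, ∀ t ∈ Icc (0 : ℝ) T, HasDerivAt (fun t' => g t' ζ) (g' t ζ) t)
    (hIII : ∀ t ∈ Icc (0 : ℝ) T,
      (fun ζ => g t ζ) ∈ A ∧ Gen (fun ζ => g t ζ) = fun ζ => h t ζ)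
    (hIV : ∃ C : ℝ, ∀ t₁ ∈ Icc (0 : ℝ) T, ∀ t₂ ∈ Icc (0 : ℝ) T,
      (∫⁻ ω, ENNReal.ofReal (g' t₁ (η t₂ ω) ^ 2 + h t₁ (η t₂ ω) ^ 2) ∂P) ≤
        ENNReal.ofReal C) :
    IsMartOn ℱ P (fun t ω =>
      g (min t T) (η (min t T) ω) - g 0 (η 0 ω) -
        ∫ s in Ioc (0 : ℝ) (min t T), (g' s (η s ω) + h s (η s ω))) :=
  statement9_general P ℱ A Gen η hη_jointly_meas hη_adapted hη_right_cont hmart T hT g g' h hg_cont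
    hg'_cont hh_cont hI hII hIII hIV

end StochasticChainRule
end

section
/- Let M ∈ ℕ and Λ := {0,1,…,M} ⊂ ℤ. For ζ : Λ → ℤ and x ∈ Λ let ζ + δ_x (respectively ζ − δ_x) denote the function obtained by adding (respectively subtracting) 1 at the coordinate x. For ξ, ζ : Λ → ℤ set 𝔇(ξ,ζ) := ∏_{x∈Λ} D^N_{ξ(x)}(ζ(x)) ∈ ℚ, and for f : ℤ^Λ → ℚ and ζ : Λ → ℕ₀ define the reflected nearest-neighbour migration generator (𝓛_m f)(ζ) := ∑_{x∈Λ} ∑_{z∈{−1,1} with x+z∈Λ} ζ(x)·(f(ζ + δ_{x+z} − δ_x) − f(ζ)). Then for all ξ, ζ : Λ → ℕ₀ one has (𝓛_m 𝔇(ξ,·))(ζ) = (𝓛_m 𝔇(·,ζ))(ξ). -/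
/-!
The generator is a sum over the bonds `{x, x+1}` of `Λ` of two-site generators, each acting
on two factors of the product `𝔇(ξ, ζ)` only, so it suffices to prove self-duality of the
two-site generator on `D^N_a(i) D^N_b(j)`. Writing `f(a, i) = D^N_a(i)`, this follows by a
direct computation from three identities for scaled falling factorials:
`i f(a, i-1) = (i-a) f(a, i)`, `N f(a, i+1) = N f(a, i) + a f(a-1, i)` and
`N f(a+1, i) = (i-a) f(a, i)`.
-/

namespace MigrationDuality

/-- The descending factorial `i (i−1) ⋯ (i−j+1)` of an integer `i`. -/
def dfac (i : ℤ) (j : ℕ) : ℤ := ∏ t ∈ Finset.range j, (i - (t : ℤ))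

/-- The scaled Poisson polynomial `D^N_j(i)`: equal to `1` if `j ≤ 0` or `i < 0`, and to
`i (i−1) ⋯ (i−j+1) / N^j` otherwise. -/
noncomputable def DN (N : ℕ) (j i : ℤ) : ℚ :=
  if j ≤ 0 ∨ i < 0 then 1 else (dfac i j.toNat : ℚ) / (N : ℚ) ^ j.toNat

/-- `ζ + δ_y − δ_x`: move one particle from `x` to `y`. -/
def move (ζ : ℤ → ℤ) (x y : ℤ) : ℤ → ℤ :=
  fun t => ζ t + (if t = y then 1 else 0) - (if t = x then 1 else 0)

/-- The duality function `𝔇(ξ,ζ) = ∏_{x∈Λ} D^N_{ξ(x)}(ζ(x))` on the box `Λ = {0,…,M}`. -/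
noncomputable def Dprod (N : ℕ) (M : ℕ) (ξ ζ : ℤ → ℤ) : ℚ :=
  ∏ x ∈ Finset.Icc (0 : ℤ) (M : ℤ), DN N (ξ x) (ζ x)

/-- The reflected nearest-neighbour migration generator on the box `Λ = {0,…,M}`. -/
noncomputable def genM (M : ℕ) (f : (ℤ → ℤ) → ℚ) (ζ : ℤ → ℤ) : ℚ :=
  ∑ x ∈ Finset.Icc (0 : ℤ) (M : ℤ), ∑ z ∈ ({-1, 1} : Finset ℤ),
    if x + z ∈ Finset.Icc (0 : ℤ) (M : ℤ) then (ζ x : ℚ) * (f (move ζ x (x + z)) - f ζ)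
    else 0

lemma dfac_succ (i : ℤ) (k : ℕ) : dfac i (k + 1) = dfac i k * (i - k) :=
  Finset.prod_range_succ _ _

lemma dfac_succ' (i : ℤ) (k : ℕ) : dfac i (k + 1) = i * dfac (i - 1) k := by
  rw [dfac, Finset.prod_range_succ', mul_comm, dfac]
  simp only [Nat.cast_add_one, Nat.cast_zero, sub_zero, sub_add_eq_sub_sub_swap]

lemma dfac_add_one (i : ℤ) (k : ℕ) :
    dfac (i + 1) (k + 1) = dfac i (k + 1) + (k + 1) * dfac i k := by
  rw [dfac_succ' (i + 1), add_sub_cancel_right, dfac_succ]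
  ring

section ScaledPoisson

variable {N : ℕ} {a i : ℤ}

lemma DN_of_nonpos (i : ℤ) (ha : a ≤ 0) : DN N a i = 1 := by
  simp [DN, ha]

lemma DN_natCast (k : ℕ) (hi : 0 ≤ i) : DN N k i = dfac i k / (N : ℚ) ^ k := by
  rcases k with _ | k
  · simp [DN, dfac]
  · simp [DN, hi.not_gt]

lemma mul_DN_sub_one (ha : 0 ≤ a) (hi : 0 ≤ i) :
    (i : ℚ) * DN N a (i - 1) = (i - a) * DN N a i := by
  lift a to ℕ using ha
  have hnum : (i : ℚ) * dfac (i - 1) a = (i - (a : ℤ)) * dfac i a := by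
    exact_mod_cast (dfac_succ' i a).symm.trans ((dfac_succ i a).trans (mul_comm _ _))
  rcases hi.eq_or_lt with rfl | hi
  · rw [DN_natCast a (le_refl (0 : ℤ)), ← mul_div_assoc, ← hnum]
    simp
  · rw [DN_natCast a (by omega), DN_natCast a hi.le, ← mul_div_assoc, ← mul_div_assoc, hnum]

variable (hN : (N : ℚ) ≠ 0)
include hN

lemma mul_DN_add_one_left (ha : 0 ≤ a) (hi : 0 ≤ i) :
    (N : ℚ) * DN N (a + 1) i = (i - a) * DN N a i := by
  lift a to ℕ using ha
  rw [← Nat.cast_add_one, DN_natCast _ hi, DN_natCast _ hi, dfac_succ]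
  push_cast
  field_simp
  ring

lemma mul_DN_add_one_right (ha : 0 ≤ a) (hi : 0 ≤ i) :
    (N : ℚ) * DN N a (i + 1) = N * DN N a i + a * DN N (a - 1) i := by
  lift a to ℕ using ha
  rcases a with _ | k
  · simp [DN_of_nonpos]
  · rw [Nat.cast_add_one, add_sub_cancel_right, ← Nat.cast_add_one, DN_natCast _ (by omega),
      DN_natCast _ hi, DN_natCast _ hi, dfac_add_one]
    push_cast
    field_simp
    ring

/-- Self-duality of the two-site migration generator. -/
lemma DN_bond_duality {b j : ℤ} (ha : 0 ≤ a) (hb : 0 ≤ b) (hi : 0 ≤ i) (hj : 0 ≤ j) :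
    (i : ℚ) * (DN N a (i - 1) * DN N b (j + 1)) + j * (DN N a (i + 1) * DN N b (j - 1))
      - (i + j) * (DN N a i * DN N b j)
    = a * (DN N (a - 1) i * DN N (b + 1) j) + b * (DN N (a + 1) i * DN N (b - 1) j)
      - (a + b) * (DN N a i * DN N b j) := by
  refine mul_left_cancel₀ hN ?_
  linear_combination N * DN N b (j + 1) * mul_DN_sub_one ha hi
    + N * DN N a (i + 1) * mul_DN_sub_one hb hj
    + (i - a) * DN N a i * mul_DN_add_one_right hN hb hj
    + (j - b) * DN N b j * mul_DN_add_one_right hN ha hi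
    - b * DN N (b - 1) j * mul_DN_add_one_left hN ha hi
    - a * DN N (a - 1) i * mul_DN_add_one_left hN hb hj

end ScaledPoisson

section Move

variable {ζ : ℤ → ℤ} {x y t : ℤ}

lemma move_apply_source (h : x ≠ y) : move ζ x y x = ζ x - 1 := by
  simp [move, h]

lemma move_apply_target (h : x ≠ y) : move ζ x y y = ζ y + 1 := by
  simp [move, h.symm]

lemma move_apply_of_ne (hx : t ≠ x) (hy : t ≠ y) : move ζ x y t = ζ t := by
  simp [move, hx, hy]

end Move

lemma Dprod_eq_mul_mul_rest {N M : ℕ} {ξ ζ ξ' ζ' : ℤ → ℤ} {x y : ℤ}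
    (hx : x ∈ Finset.Icc (0 : ℤ) M) (hy : y ∈ Finset.Icc (0 : ℤ) M) (hxy : x ≠ y)
    (hξ' : ∀ t, t ≠ x → t ≠ y → ξ' t = ξ t) (hζ' : ∀ t, t ≠ x → t ≠ y → ζ' t = ζ t) :
    Dprod N M ξ' ζ' = DN N (ξ' x) (ζ' x) * DN N (ξ' y) (ζ' y) *
      ∏ t ∈ ((Finset.Icc (0 : ℤ) M).erase x).erase y, DN N (ξ t) (ζ t) := by
  rw [Dprod, ← Finset.mul_prod_erase _ _ hx,
    ← Finset.mul_prod_erase _ _ (Finset.mem_erase.2 ⟨hxy.symm, hy⟩), ← mul_assoc]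
  refine congrArg _ (Finset.prod_congr rfl fun t ht => ?_)
  obtain ⟨hty, htx, -⟩ : t ≠ y ∧ t ≠ x ∧ _ := by simpa using ht
  rw [hξ' t htx hty, hζ' t htx hty]

lemma Dprod_bond_duality {N M : ℕ} (hN : (N : ℚ) ≠ 0) {ξ ζ : ℤ → ℤ}
    (hξ : ∀ x, 0 ≤ ξ x) (hζ : ∀ x, 0 ≤ ζ x) {x y : ℤ}
    (hx : x ∈ Finset.Icc (0 : ℤ) M) (hy : y ∈ Finset.Icc (0 : ℤ) M) (hxy : x ≠ y) :
    (ζ x : ℚ) * (Dprod N M ξ (move ζ x y) - Dprod N M ξ ζ)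
      + ζ y * (Dprod N M ξ (move ζ y x) - Dprod N M ξ ζ)
    = ξ x * (Dprod N M (move ξ x y) ζ - Dprod N M ξ ζ)
      + ξ y * (Dprod N M (move ξ y x) ζ - Dprod N M ξ ζ) := by
  have split := fun ξ' ζ' =>
    Dprod_eq_mul_mul_rest (N := N) (ξ := ξ) (ζ := ζ) (ξ' := ξ') (ζ' := ζ') hx hy hxy
  have hmove : ∀ ρ : ℤ → ℤ, ∀ t, t ≠ x → t ≠ y → move ρ x y t = ρ t :=
    fun _ _ htx hty => move_apply_of_ne htx hty
  have hmove' : ∀ ρ : ℤ → ℤ, ∀ t, t ≠ x → t ≠ y → move ρ y x t = ρ t :=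
    fun _ _ htx hty => move_apply_of_ne hty htx
  rw [split ξ ζ (fun _ _ _ => rfl) (fun _ _ _ => rfl),
    split ξ _ (fun _ _ _ => rfl) (hmove ζ), split ξ _ (fun _ _ _ => rfl) (hmove' ζ),
    split _ ζ (hmove ξ) (fun _ _ _ => rfl), split _ ζ (hmove' ξ) (fun _ _ _ => rfl)]
  simp only [move_apply_source hxy, move_apply_target hxy, move_apply_source hxy.symm,
    move_apply_target hxy.symm]
  linear_combination (∏ t ∈ ((Finset.Icc (0 : ℤ) M).erase x).erase y, DN N (ξ t) (ζ t)) *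
    DN_bond_duality hN (hξ x) (hξ y) (hζ x) (hζ y)

lemma genM_eq_sum_bonds (M : ℕ) (f : (ℤ → ℤ) → ℚ) (ζ : ℤ → ℤ) :
    genM M f ζ = ∑ x ∈ Finset.Ico (0 : ℤ) M,
      ((ζ x : ℚ) * (f (move ζ x (x + 1)) - f ζ)
        + ζ (x + 1) * (f (move ζ (x + 1) x) - f ζ)) := by
  set jump : ℤ → ℤ → ℚ := fun x y => ζ x * (f (move ζ x y) - f ζ)
  have hleft : (Finset.Icc (0 : ℤ) M).filter (fun x => x + -1 ∈ Finset.Icc (0 : ℤ) M) =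
      (Finset.Ico (0 : ℤ) M).image (· + 1) := by
    ext x; simp only [Finset.mem_filter, Finset.mem_Icc, Finset.mem_image, Finset.mem_Ico]
    constructor
    · intro h; exact ⟨x - 1, by omega, by omega⟩
    · rintro ⟨y, hy, rfl⟩; omega
  have hright : (Finset.Icc (0 : ℤ) M).filter (fun x => x + 1 ∈ Finset.Icc (0 : ℤ) M) =
      Finset.Ico (0 : ℤ) M := by
    ext x; simp only [Finset.mem_filter, Finset.mem_Icc, Finset.mem_Ico]; omega
  calc genM M f ζ
      = ∑ x ∈ (Finset.Icc (0 : ℤ) M).filter (fun x => x + -1 ∈ Finset.Icc (0 : ℤ) M),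
          jump x (x + -1)
        + ∑ x ∈ (Finset.Icc (0 : ℤ) M).filter (fun x => x + 1 ∈ Finset.Icc (0 : ℤ) M),
          jump x (x + 1) := by
        simp only [genM, Finset.sum_filter, ← Finset.sum_add_distrib]
        refine Finset.sum_congr rfl fun x _ => ?_
        rw [Finset.sum_pair (by norm_num)]
    _ = _ := by
        rw [hleft, hright, Finset.sum_image (fun _ _ _ _ h => add_right_cancel h),
          ← Finset.sum_add_distrib]
        refine Finset.sum_congr rfl fun x _ => ?_
        simp only [jump, add_neg_cancel_right]
        ring

/-- Self-duality of the reflected migration generator acting on scaled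
Poisson polynomials: `(𝓛_m 𝔇(ξ,·))(ζ) = (𝓛_m 𝔇(·,ζ))(ξ)` for all `ξ, ζ : Λ → ℕ₀`. -/
theorem statement10 (N : ℕ) (hN : 1 ≤ N) (M : ℕ) (ξ ζ : ℤ → ℤ)
    (hξ : ∀ x, 0 ≤ ξ x) (hζ : ∀ x, 0 ≤ ζ x) :
    genM M (fun ρ => Dprod N M ξ ρ) ζ = genM M (fun ρ => Dprod N M ρ ζ) ξ := by
  have hN0 : (N : ℚ) ≠ 0 := by exact_mod_cast (Nat.one_le_iff_ne_zero.1 hN)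
  rw [genM_eq_sum_bonds, genM_eq_sum_bonds]
  refine Finset.sum_congr rfl fun x hx => ?_
  obtain ⟨hx0, hxM⟩ := Finset.mem_Ico.1 hx
  exact Dprod_bond_duality hN0 hξ hζ (Finset.mem_Icc.2 ⟨hx0, hxM.le⟩)
    (Finset.mem_Icc.2 ⟨by omega, by omega⟩) (by omega)

end MigrationDuality
end

section
/- For all a, b, c, d ∈ ℕ₀, the following identity holds in ℤ: d·(df(b+1,a)·df(d−1,c) − df(b,a)·df(d,c)) + b·(df(b−1,a)·df(d+1,c) − df(b,a)·df(d,c)) = c·(df(b,a+1)·df(d,c−1) − df(b,a)·df(d,c)) + a·(df(b,a−1)·df(d,c+1) − df(b,a)·df(d,c)). -/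
lemma df_succ_left (n k : ℕ) :
    ((n + 1).descFactorial k : ℤ) =
      (n.descFactorial k : ℤ) + (k : ℤ) * (n.descFactorial (k - 1) : ℤ) := by
  cases k with
  | zero => simp
  | succ j =>
    rw [Nat.succ_descFactorial_succ, Nat.descFactorial_succ]
    by_cases h : j ≤ n
    · push_cast [h]; ring
    · have h1 : n.descFactorial j = 0 := Nat.descFactorial_eq_zero_iff_lt.mpr (by omega)
      simp [h1, Nat.sub_eq_zero_of_le (le_of_not_ge h)]

lemma df_mul_left (n k : ℕ) :
    (n : ℤ) * ((n - 1).descFactorial k : ℤ) = (n.descFactorial (k + 1) : ℤ) := by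
  cases n with
  | zero => simp
  | succ m => rw [Nat.succ_descFactorial_succ]; push_cast; simp

lemma df_succ_right (n k : ℕ) :
    (n.descFactorial (k + 1) : ℤ) = ((n : ℤ) - (k : ℤ)) * (n.descFactorial k : ℤ) := by
  rw [Nat.descFactorial_succ]
  by_cases h : k ≤ n
  · push_cast [h]; ring
  · have h1 : n.descFactorial k = 0 := Nat.descFactorial_eq_zero_iff_lt.mpr (by omega)
    simp [h1]

/-- The single-edge form of the self-duality of the migration generator
acting on the scaled Poisson polynomials, written with the descending factorial
`df(n,j) = Nat.descFactorial n j` (truncated subtraction inside the arguments). -/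
theorem statement11 (a b c d : ℕ) :
    (d : ℤ) * ((Nat.descFactorial (b + 1) a : ℤ) * (Nat.descFactorial (d - 1) c : ℤ) -
          (Nat.descFactorial b a : ℤ) * (Nat.descFactorial d c : ℤ)) +
      (b : ℤ) * ((Nat.descFactorial (b - 1) a : ℤ) * (Nat.descFactorial (d + 1) c : ℤ) -
          (Nat.descFactorial b a : ℤ) * (Nat.descFactorial d c : ℤ)) =
    (c : ℤ) * ((Nat.descFactorial b (a + 1) : ℤ) * (Nat.descFactorial d (c - 1) : ℤ) -
          (Nat.descFactorial b a : ℤ) * (Nat.descFactorial d c : ℤ)) +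
      (a : ℤ) * ((Nat.descFactorial b (a - 1) : ℤ) * (Nat.descFactorial d (c + 1) : ℤ) -
          (Nat.descFactorial b a : ℤ) * (Nat.descFactorial d c : ℤ)) := by
  have h3 : (d : ℤ) * ((d - 1).descFactorial c : ℤ)
      = ((d : ℤ) - c) * (d.descFactorial c : ℤ) := (df_mul_left d c).trans (df_succ_right d c)
  have h4 : (b : ℤ) * ((b - 1).descFactorial a : ℤ)
      = ((b : ℤ) - a) * (b.descFactorial a : ℤ) := (df_mul_left b a).trans (df_succ_right b a)
  rw [df_succ_left b a, df_succ_left d c, df_succ_right b a, df_succ_right d c]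
  linear_combination ((b.descFactorial a : ℤ) + (a : ℤ) * (b.descFactorial (a - 1) : ℤ)) * h3 +
    ((d.descFactorial c : ℤ) + (c : ℤ) * (d.descFactorial (c - 1) : ℤ)) * h4
end

section
/- For all integers a ≥ 1 and c ≥ 1 and all b, d ∈ ℕ₀, the following identity holds in ℤ: d·(df(b+1,a)·df(d−1,c) − df(b,a)·df(d,c)) = df(b,a−1)·df(d,c−1)·(d−c+1)·(d·a − c·(b+1)). -/
lemma cast_df_succ (n k : ℕ) :
    (Nat.descFactorial n (k+1) : ℤ) = ((n:ℤ) - k) * Nat.descFactorial n k := by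
  rcases le_or_gt k n with h | h
  · rw [Nat.descFactorial_succ]
    push_cast [h]
    ring
  · rw [Nat.descFactorial_eq_zero_iff_lt.2 (by omega),
        Nat.descFactorial_eq_zero_iff_lt.2 h]
    simp

/-- The factored form of the key computation for the scaled Poisson
polynomials, written with the descending factorial `df(n,j) = Nat.descFactorial n j`
(truncated subtraction inside the arguments of `df`, integer arithmetic outside). -/
theorem statement12 (a c : ℕ) (ha : 1 ≤ a) (hc : 1 ≤ c) (b d : ℕ) :
    (d : ℤ) * ((Nat.descFactorial (b + 1) a : ℤ) * (Nat.descFactorial (d - 1) c : ℤ) -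
          (Nat.descFactorial b a : ℤ) * (Nat.descFactorial d c : ℤ)) =
      (Nat.descFactorial b (a - 1) : ℤ) * (Nat.descFactorial d (c - 1) : ℤ) *
        ((d : ℤ) - (c : ℤ) + 1) * ((d : ℤ) * (a : ℤ) - (c : ℤ) * ((b : ℤ) + 1)) := by
  obtain ⟨a', rfl⟩ : ∃ a', a = a' + 1 := ⟨a - 1, by omega⟩
  obtain ⟨c', rfl⟩ : ∃ c', c = c' + 1 := ⟨c - 1, by omega⟩
  simp only [Nat.add_sub_cancel]
  rcases d with _ | m
  · rcases c' with _ | k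
    · push_cast; ring
    · have : Nat.descFactorial 0 (k+1) = 0 :=
        Nat.descFactorial_eq_zero_iff_lt.2 (by omega)
      simp [this]
  · have h2 : (Nat.descFactorial (b+1) (a'+1) : ℤ)
        = ((b:ℤ)+1) * Nat.descFactorial b a' := by
      rw [Nat.succ_descFactorial_succ]; push_cast; ring
    have h3 : (Nat.descFactorial (m+1) (c'+1) : ℤ)
        = ((m:ℤ)+1) * Nat.descFactorial m c' := by
      rw [Nat.succ_descFactorial_succ]; push_cast; ring
    have h4 := cast_df_succ b a'
    have h5 := cast_df_succ (m+1) c'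
    have h6 := cast_df_succ m c'
    have key : ((m:ℤ)+1 - c') * Nat.descFactorial (m+1) c'
        = ((m:ℤ)+1) * Nat.descFactorial m c' := by
      rw [← h3, h5]; push_cast; ring
    simp only [Nat.succ_sub_one]
    push_cast [h2, h3, h4, h6]
    linear_combination
      (-(Nat.descFactorial b a' : ℤ) *
        (((m:ℤ)+1) * ((a':ℤ)+1) - ((c':ℤ)+1) * ((b:ℤ)+1))) * key
end

section
/- Assume q₊ and q₋ satisfy Assumption B. Then there exists a nondecreasing function ϑ : ℕ₀ → [0,∞) with ϑ(0) = 0 such that for every integer k ≥ 1 and every real v ≥ 0: k·(v·q₊(v) − v·q₋(v) + k·q₋(v)) ≤ ϑ(k), and moreover q₊(v) − q₋(v) ≤ ϑ(1) and v·(q₊(v) − q₋(v)) ≤ ϑ(1) for every real v ≥ 0. -/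
open Filter Polynomial

/-- A continuous real function tending to `-∞` at `+∞` is bounded above on `[0,∞)`. -/
lemma bddAbove_of_tendsto_atBot' (f : ℝ → ℝ) (hc : Continuous f)
    (h : Tendsto f atTop atBot) : ∃ M : ℝ, 0 ≤ M ∧ ∀ v : ℝ, 0 ≤ v → f v ≤ M := by
  have hev : ∀ᶠ x in atTop, f x ≤ 0 := h.eventually (eventually_le_atBot 0)
  rw [eventually_atTop] at hev
  obtain ⟨A, hA⟩ := hev
  set A' := max A 0 with hA'
  obtain ⟨x0, -, hx0⟩ := isCompact_Icc.exists_isMaxOn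
    (⟨0, Set.left_mem_Icc.mpr (le_max_right A 0)⟩ : (Set.Icc (0:ℝ) A').Nonempty) hc.continuousOn
  refine ⟨max (f x0) 0, le_max_right _ _, fun v hv => ?_⟩
  rcases le_total v A' with hle | hge
  · exact le_trans (hx0 ⟨hv, hle⟩) (le_max_left _ _)
  · exact le_trans (hA v (le_trans (le_max_left _ _) hge)) (le_max_right _ _)

/-- Under Assumption B there is a nondecreasing `ϑ : ℕ → [0,∞)` with
`ϑ(0) = 0` such that `k (v q₊(v) − v q₋(v) + k q₋(v)) ≤ ϑ(k)` for all integers `k ≥ 1` and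
reals `v ≥ 0`, and moreover `q₊(v) − q₋(v) ≤ ϑ(1)` and `v (q₊(v) − q₋(v)) ≤ ϑ(1)` for all
`v ≥ 0`. -/
theorem statement13 (qp qm : Polynomial ℝ)
    (hqp : ∀ v : ℝ, 0 ≤ v → 0 ≤ qp.eval v) (hqm : ∀ v : ℝ, 0 ≤ v → 0 ≤ qm.eval v)
    (hdeg : qp.natDegree < qm.natDegree) :
    ∃ ϑ : ℕ → ℝ, Monotone ϑ ∧ (∀ k : ℕ, 0 ≤ ϑ k) ∧ ϑ 0 = 0 ∧
      (∀ k : ℕ, 1 ≤ k → ∀ v : ℝ, 0 ≤ v →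
        (k : ℝ) * (v * qp.eval v - v * qm.eval v + (k : ℝ) * qm.eval v) ≤ ϑ k) ∧
      (∀ v : ℝ, 0 ≤ v → qp.eval v - qm.eval v ≤ ϑ 1) ∧
      (∀ v : ℝ, 0 ≤ v → v * (qp.eval v - qm.eval v) ≤ ϑ 1) := by
  have hdm : 0 < qm.natDegree := lt_of_le_of_lt (Nat.zero_le _) hdeg
  have hqm0 : qm ≠ 0 := fun h => by simp [h] at hdm
  have hdmdeg : 0 < qm.degree := natDegree_pos_iff_degree_pos.mp hdm
  -- leading coefficient of qm is positive
  have hlc : 0 < qm.leadingCoeff := by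
    rcases lt_or_ge 0 qm.leadingCoeff with h | h
    · exact h
    · exfalso
      have ht := qm.tendsto_atBot_of_leadingCoeff_nonpos hdmdeg h
      have : ∀ᶠ x in atTop, qm.eval x ≤ -1 := ht.eventually (eventually_le_atBot (-1))
      rw [eventually_atTop] at this
      obtain ⟨A, hA⟩ := this
      have h1 := hA (max A 0) (le_max_left _ _)
      have h2 := hqm (max A 0) (le_max_right _ _)
      linarith
  -- the polynomial r = qm - qp
  set r := qm - qp with hr
  have hrd : r.natDegree = qm.natDegree := natDegree_sub_eq_left_of_natDegree_lt hdeg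
  have hrne : r ≠ 0 := fun h => by rw [h] at hrd; simp at hrd; omega
  have hrlc : r.leadingCoeff = qm.leadingCoeff := by
    rw [leadingCoeff, hrd, hr, coeff_sub, coeff_eq_zero_of_natDegree_lt hdeg, sub_zero,
      leadingCoeff]
  have hrdeg : 0 < r.degree := natDegree_pos_iff_degree_pos.mp (hrd ▸ hdm)
  -- bound C1 for qp - qm
  have hqpqm : qp - qm = -r := by rw [hr]; ring
  obtain ⟨C1, hC10, hC1⟩ := bddAbove_of_tendsto_atBot' (fun v => (qp - qm).eval v)
    (qp - qm).continuous
    ((qp - qm).tendsto_atBot_of_leadingCoeff_nonpos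
      (by rw [hqpqm, degree_neg]; exact hrdeg)
      (by rw [hqpqm, leadingCoeff_neg, hrlc]; linarith))
  -- facts about X * r
  have hXrd : (X * r).natDegree = 1 + qm.natDegree := by
    rw [natDegree_mul X_ne_zero hrne, natDegree_X, hrd]
  have hXr_deg : 0 < (X * r).degree := natDegree_pos_iff_degree_pos.mp (by omega)
  have hXr_lc : (X * r).leadingCoeff = qm.leadingCoeff := by
    rw [leadingCoeff_mul, leadingCoeff_X, one_mul, hrlc]
  -- bound C2 for v * (qp - qm)
  have hXqpqm : X * (qp - qm) = -(X * r) := by rw [hqpqm]; ring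
  obtain ⟨C2, hC20, hC2⟩ := bddAbove_of_tendsto_atBot' (fun v => v * (qp - qm).eval v)
    (continuous_id.mul (qp - qm).continuous)
    (by
      have ht := (X * (qp - qm)).tendsto_atBot_of_leadingCoeff_nonpos
        (by rw [hXqpqm, degree_neg]; exact hXr_deg)
        (by rw [hXqpqm, leadingCoeff_neg, hXr_lc]; linarith)
      have heq : (fun v => v * (qp - qm).eval v) = fun v => (X * (qp - qm)).eval v := by
        funext v; simp [eval_mul]
      rw [heq]; exact ht)
  -- for each k, bound for the inner expression
  have hB : ∀ k : ℕ, ∃ B : ℝ, 0 ≤ B ∧ ∀ v : ℝ, 0 ≤ v →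
      v * qp.eval v - v * qm.eval v + (k : ℝ) * qm.eval v ≤ B := by
    intro k
    set p := X * r - Polynomial.C (k : ℝ) * qm with hp
    have hcd : (Polynomial.C (k : ℝ) * qm).natDegree < (X * r).natDegree := by
      have h1 : (Polynomial.C (k : ℝ) * qm).natDegree ≤ qm.natDegree :=
        natDegree_C_mul_le _ _
      omega
    have hpd : p.natDegree = (X * r).natDegree :=
      natDegree_sub_eq_left_of_natDegree_lt hcd
    have h0 : (Polynomial.C (k : ℝ) * qm).coeff ((X * r).natDegree) = 0 :=
      coeff_eq_zero_of_natDegree_lt hcd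
    have hplc : p.leadingCoeff = qm.leadingCoeff := by
      rw [leadingCoeff, hpd, hp, coeff_sub, h0, sub_zero, ← leadingCoeff, hXr_lc]
    have hpdeg : 0 < p.degree := natDegree_pos_iff_degree_pos.mp (by omega)
    have hnegp : Polynomial.C (k : ℝ) * qm - X * r = -p := by rw [hp]; ring
    obtain ⟨B, hB0, hBle⟩ := bddAbove_of_tendsto_atBot'
      (fun v => v * qp.eval v - v * qm.eval v + (k : ℝ) * qm.eval v)
      (((continuous_id.mul qp.continuous).sub (continuous_id.mul qm.continuous)).add
        (continuous_const.mul qm.continuous))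
      (by
        have ht := (Polynomial.C (k : ℝ) * qm - X * r).tendsto_atBot_of_leadingCoeff_nonpos
          (by rw [hnegp, degree_neg]; exact hpdeg)
          (by rw [hnegp, leadingCoeff_neg, hplc]; linarith)
        have heq : (fun v => v * qp.eval v - v * qm.eval v + (k : ℝ) * qm.eval v)
            = fun v => (Polynomial.C (k : ℝ) * qm - X * r).eval v := by
          funext v; simp [hr]; ring
        rw [heq]; exact ht)
    exact ⟨B, hB0, hBle⟩
  choose B hB0 hBle using hB
  -- define ϑ as a running sum of nonnegative terms
  set g : ℕ → ℝ := fun j => max (max (((j + 1 : ℕ) : ℝ) * B (j + 1)) C1) C2 with hg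
  have hg0 : ∀ j, 0 ≤ g j := fun j => le_trans hC20 (le_max_right _ _)
  refine ⟨fun n => ∑ j ∈ Finset.range n, g j, ?_, ?_, ?_, ?_, ?_, ?_⟩
  · intro a b hab
    exact Finset.sum_le_sum_of_subset_of_nonneg (Finset.range_subset_range.mpr hab)
      (fun j _ _ => hg0 j)
  · intro k
    exact Finset.sum_nonneg fun j _ => hg0 j
  · simp
  · intro k hk v hv
    have hkpos : (0:ℝ) ≤ (k : ℝ) := Nat.cast_nonneg k
    have h1 : (k : ℝ) * (v * qp.eval v - v * qm.eval v + (k : ℝ) * qm.eval v)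
        ≤ (k : ℝ) * B k := mul_le_mul_of_nonneg_left (hBle k v hv) hkpos
    have h2 : (k : ℝ) * B k ≤ g (k - 1) := by
      have hk1 : k - 1 + 1 = k := Nat.succ_pred_eq_of_pos hk
      rw [hg]
      simp only [hk1]
      exact le_trans (le_max_left _ _) (le_max_left _ _)
    have h3 : g (k - 1) ≤ ∑ j ∈ Finset.range k, g j :=
      Finset.single_le_sum (fun j _ => hg0 j) (Finset.mem_range.mpr (by omega))
    linarith
  · intro v hv
    have := hC1 v hv
    simp only [eval_sub] at this
    calc qp.eval v - qm.eval v ≤ C1 := this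
      _ ≤ g 0 := le_trans (le_max_right _ _) (le_max_left _ _)
      _ = ∑ j ∈ Finset.range 1, g j := by simp
  · intro v hv
    have := hC2 v hv
    simp only [eval_sub] at this
    calc v * (qp.eval v - qm.eval v) ≤ C2 := this
      _ ≤ g 0 := le_max_right _ _
      _ = ∑ j ∈ Finset.range 1, g j := by simp
end

section
/- Let p > 1 be a real number, let z ∈ {−L⁻¹, L⁻¹}, and let a : L⁻¹ℤ → [0,∞]. Then, with all sums taken in [0,∞], ∑_{x∈L⁻¹ℤ} a(x)·a(x+z)^{p−1}/(1+|x+z|)^{2p} ≤ (sup_{y∈L⁻¹ℤ} ((1+|y|)/(1+|y+z|))²) · ∑_{x∈L⁻¹ℤ} a(x)^p/(1+|x|)^{2p}. -/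
/-!
Split the summand as `f x * g x` with `f x = a x / w (x + z)` and
`g x = (a (x + z) / w (x + z)) ^ (p - 1)`, where `w = (1 + |·|)²`, and apply Hölder's inequality
with exponents `p` and `p / (p - 1)`. Then `∑ g ^ (p / (p - 1))` is the right-hand sum reindexed
by the shift, and `∑ f ^ p` is at most `(sup w y / w (y + z)) ^ p` times that sum.
-/

open scoped ENNReal

namespace HolderDemeBound

/-- The real position `n / L` of the deme indexed by `n : ℤ`. -/
noncomputable def pos (L : ℝ) (n : ℤ) : ℝ := (n : ℝ) / L

end HolderDemeBound

theorem ENNReal.tsum_mul_le_tsum_rpow_mul_tsum_rpow {ι : Type*} {p q : ℝ}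
    (hpq : p.HolderConjugate q) (f g : ι → ℝ≥0∞) :
    ∑' i, f i * g i ≤ (∑' i, f i ^ p) ^ (1 / p) * (∑' i, g i ^ q) ^ (1 / q) := by
  let _ : MeasurableSpace ι := ⊤
  simpa only [MeasureTheory.lintegral_count' (measurable_from_top (f := _)), Pi.mul_apply] using
    ENNReal.lintegral_mul_le_Lp_mul_Lq MeasureTheory.Measure.count hpq
      measurable_from_top.aemeasurable measurable_from_top.aemeasurable

theorem ENNReal.tsum_mul_le_of_tsum_rpow_le {ι : Type*} {p q : ℝ} (hpq : p.HolderConjugate q)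
    {f g : ι → ℝ≥0∞} {C S : ℝ≥0∞} (hf : ∑' i, f i ^ p ≤ C ^ p * S) (hg : ∑' i, g i ^ q ≤ S) :
    ∑' i, f i * g i ≤ C * S := calc
  ∑' i, f i * g i ≤ (∑' i, f i ^ p) ^ (1 / p) * (∑' i, g i ^ q) ^ (1 / q) :=
    ENNReal.tsum_mul_le_tsum_rpow_mul_tsum_rpow hpq f g
  _ ≤ (C ^ p * S) ^ (1 / p) * S ^ (1 / q) := by
    gcongr
    · exact hpq.one_div_nonneg
    · exact hpq.symm.one_div_nonneg
  _ = C * (S ^ p⁻¹ * S ^ q⁻¹) := by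
    rw [ENNReal.mul_rpow_of_nonneg _ _ hpq.one_div_nonneg, ← ENNReal.rpow_mul,
      mul_one_div_cancel hpq.ne_zero, ENNReal.rpow_one, mul_assoc, one_div, one_div]
  _ = C * S := by
    rw [← ENNReal.rpow_add_of_nonneg _ _ hpq.inv_nonneg hpq.symm.inv_nonneg,
      hpq.inv_add_inv_eq_one, ENNReal.rpow_one]

theorem ENNReal.div_mul_div_rpow_sub_one {p : ℝ} (hp : 1 < p) (a b w : ℝ≥0∞) :
    a / w * (b / w) ^ (p - 1) = a * b ^ (p - 1) / w ^ p := by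
  have hp1 : 0 ≤ p - 1 := by linarith
  have hwp : w ^ p = w * w ^ (p - 1) := by
    conv_lhs => rw [show p = 1 + (p - 1) by ring]
    rw [ENNReal.rpow_add_of_nonneg _ _ zero_le_one hp1, ENNReal.rpow_one]
  -- no side conditions on `w`: for `w ∈ {0, ∞}` the power `w ^ (p - 1)` equals `w` since `p > 1`
  have hinv : (w * w ^ (p - 1))⁻¹ = w⁻¹ * (w ^ (p - 1))⁻¹ := by
    refine ENNReal.mul_inv ?_ ?_
    · rcases eq_or_ne w 0 with rfl | hw
      · simp [ENNReal.zero_rpow_of_pos (sub_pos.2 hp)]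
      · exact .inl hw
    · rcases eq_or_ne w ∞ with rfl | hw
      · simp [ENNReal.top_rpow_of_pos (sub_pos.2 hp)]
      · exact .inl hw
  rw [ENNReal.div_rpow_of_nonneg _ _ hp1, hwp, div_eq_mul_inv, div_eq_mul_inv, div_eq_mul_inv,
    hinv]
  ring

theorem ENNReal.tsum_mul_rpow_comp_div_le {ι : Type*} {p : ℝ} (hp : 1 < p) {e : ι → ι}
    (he : Function.Injective e) (a : ι → ℝ≥0∞) {w : ι → ℝ≥0∞} (hw₀ : ∀ i, w i ≠ 0)
    (hw : ∀ i, w i ≠ ∞) :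
    ∑' x, a x * a (e x) ^ (p - 1) / w (e x) ^ p ≤
      (⨆ y, w y / w (e y)) * ∑' x, a x ^ p / w x ^ p := by
  have hp₀ : 0 ≤ p := by linarith
  have hf : ∑' x, (a x / w (e x)) ^ p ≤ (⨆ y, w y / w (e y)) ^ p * ∑' x, a x ^ p / w x ^ p := by
    rw [← ENNReal.tsum_mul_left]
    refine ENNReal.tsum_le_tsum fun x => ?_
    calc (a x / w (e x)) ^ p = (w x / w (e x)) ^ p * (a x ^ p / w x ^ p) := by
          rw [ENNReal.div_rpow_of_nonneg _ _ hp₀, ENNReal.div_rpow_of_nonneg _ _ hp₀, mul_comm,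
            ← mul_div_assoc, ENNReal.div_mul_cancel (ENNReal.rpow_pos_of_nonneg
              (pos_iff_ne_zero.2 (hw₀ x)) hp₀).ne' (ENNReal.rpow_ne_top_of_nonneg hp₀ (hw x))]
      _ ≤ (⨆ y, w y / w (e y)) ^ p * (a x ^ p / w x ^ p) := by
          gcongr
          exact le_iSup (fun y => w y / w (e y)) x
  have hg : ∑' x, ((a (e x) / w (e x)) ^ (p - 1)) ^ p.conjExponent ≤
      ∑' x, a x ^ p / w x ^ p := by
    have hexp : (p - 1) * p.conjExponent = p := by
      rw [Real.conjExponent, mul_div_cancel₀ _ (sub_pos.2 hp).ne']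
    simp only [← ENNReal.rpow_mul, hexp, ENNReal.div_rpow_of_nonneg _ _ hp₀]
    exact ENNReal.tsum_comp_le_tsum_of_injective he (fun y => a y ^ p / w y ^ p)
  simpa only [ENNReal.div_mul_div_rpow_sub_one hp] using
    ENNReal.tsum_mul_le_of_tsum_rpow_le (.conjExponent hp) hf hg

namespace HolderDemeBound

theorem statement17_general (L : ℝ) (p : ℝ) (hp : 1 < p) (z : ℤ) (a : ℤ → ℝ≥0∞) :
    (∑' x : ℤ, a x * a (x + z) ^ (p - 1) / ENNReal.ofReal ((1 + |pos L (x + z)|) ^ (2 * p))) ≤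
      (⨆ y : ℤ, (ENNReal.ofReal ((1 + |pos L y|) / (1 + |pos L (y + z)|))) ^ 2) *
        ∑' x : ℤ, a x ^ p / ENNReal.ofReal ((1 + |pos L x|) ^ (2 * p)) := by
  set w : ℤ → ℝ≥0∞ := fun n => ENNReal.ofReal ((1 + |pos L n|) ^ 2) with hw_def
  have hw_rpow (n : ℤ) : w n ^ p = ENNReal.ofReal ((1 + |pos L n|) ^ (2 * p)) := by
    rw [hw_def, ENNReal.ofReal_rpow_of_nonneg (by positivity) (by linarith), ← Real.rpow_natCast,
      ← Real.rpow_mul (by positivity), Nat.cast_ofNat]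
  have hw_ratio (y : ℤ) :
      ENNReal.ofReal ((1 + |pos L y|) / (1 + |pos L (y + z)|)) ^ 2 = w y / w (y + z) := by
    rw [hw_def, ← ENNReal.ofReal_pow (by positivity), div_pow,
      ENNReal.ofReal_div_of_pos (by positivity)]
  simpa only [hw_rpow, hw_ratio] using
    ENNReal.tsum_mul_rpow_comp_div_le hp (add_left_injective z) a (w := w)
      (fun _ => (ENNReal.ofReal_pos.2 (by positivity)).ne') (fun _ => ENNReal.ofReal_ne_top)

/-- For `p > 1`, `z ∈ {−L⁻¹, L⁻¹}` (encoded as a shift by `±1` of the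
integer index) and `a : L⁻¹ℤ → [0,∞]`, with all sums taken in `[0,∞]`:
`∑_x a(x) a(x+z)^{p−1}/(1+|x+z|)^{2p}
  ≤ (sup_y ((1+|y|)/(1+|y+z|))²) ∑_x a(x)^p/(1+|x|)^{2p}`. -/
theorem statement17 (L : ℝ) (hL : 0 < L) (p : ℝ) (hp : 1 < p) (z : ℤ)
    (hz : z = 1 ∨ z = -1) (a : ℤ → ℝ≥0∞) :
    (∑' x : ℤ, a x * a (x + z) ^ (p - 1) / ENNReal.ofReal ((1 + |pos L (x + z)|) ^ (2 * p))) ≤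
      (⨆ y : ℤ, (ENNReal.ofReal ((1 + |pos L y|) / (1 + |pos L (y + z)|))) ^ 2) *
        ∑' x : ℤ, a x ^ p / ENNReal.ofReal ((1 + |pos L x|) ^ (2 * p)) :=
  statement17_general L p hp z a

end HolderDemeBound
end
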